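/- arXiv:2205.13157 — 6 statements merged into one kernel-verified Lean document; each statement's English description precedes it below -/
import Mathlib

section
/- Let p_t(x) = (4πt)^{-1/2} exp(-x²/(4t)) be the heat kernel and λ(x) = c_H (1+x²)^{H-1} with H ∈ (1/4, 1/2) and c_H chosen so that ∫_ℝ λ(x) dx = 1. Then for any T > 0, sup over t ∈ (0,T] and x ∈ ℝ of λ(x)^{-1} ∫_ℝ p_t(x-y) λ(y) dy is finite. -/
/-!
By Peetre's inequality `1 + x² ≤ 2 (1 + (x - y)²) (1 + y²)`, the weight ratio `λ(y) / λ(x)` is at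
most `(2 (1 + (x - y)²))^(1 - H)`; as `1 - H ≤ 1`, this is at most `2^(1-H) (1 + 8T) e^{(x-y)²/(8t)}`
for `t ≤ T`. Absorbing the exponential into `p_t(x - y)` leaves `√2 p_{2t}(x - y)`, whose integral
in `y` is `1`.
-/

open MeasureTheory Real Set

noncomputable def heatK (t x : ℝ) : ℝ :=
  (4 * Real.pi * t) ^ (-(1:ℝ)/2) * Real.exp (-(x ^ 2) / (4 * t))

lemma one_add_sq_le_two_mul_one_add_sq (x y : ℝ) :
    1 + x ^ 2 ≤ 2 * (1 + (x - y) ^ 2) * (1 + y ^ 2) := by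
  nlinarith [sq_nonneg (x - 2 * y), sq_nonneg ((x - y) * y)]

lemma one_add_sq_rpow_le_of_nonpos {a : ℝ} (ha : a ≤ 0) (x y : ℝ) :
    (1 + y ^ 2) ^ a ≤ (2 * (1 + (x - y) ^ 2)) ^ (-a) * (1 + x ^ 2) ^ a := by
  have hz : 0 < 2 * (1 + (x - y) ^ 2) := by positivity
  calc (1 + y ^ 2) ^ a ≤ ((1 + x ^ 2) / (2 * (1 + (x - y) ^ 2))) ^ a := by
        refine rpow_le_rpow_of_nonpos (by positivity) ?_ ha
        rw [div_le_iff₀' hz]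
        exact one_add_sq_le_two_mul_one_add_sq x y
    _ = (2 * (1 + (x - y) ^ 2)) ^ (-a) * (1 + x ^ 2) ^ a := by
        rw [div_rpow (by positivity) hz.le, rpow_neg hz.le, div_eq_inv_mul]

lemma one_add_sq_le_mul_exp {c : ℝ} (hc : 0 < c) (z : ℝ) :
    1 + z ^ 2 ≤ (1 + c) * exp (z ^ 2 / c) := by
  have one_le : 1 ≤ exp (z ^ 2 / c) := one_le_exp (by positivity)
  have le_exp : z ^ 2 / c ≤ exp (z ^ 2 / c) := by linarith [add_one_le_exp (z ^ 2 / c)]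
  have hz : z ^ 2 = c * (z ^ 2 / c) := by field_simp
  nlinarith

lemma one_add_sq_rpow_le_mul_exp {s t T : ℝ} (hs : s ≤ 1) (ht : 0 < t) (htT : t ≤ T)
    (z : ℝ) :
    (1 + z ^ 2) ^ s ≤ (1 + 8 * T) * exp (z ^ 2 / (8 * t)) := by
  calc (1 + z ^ 2) ^ s ≤ 1 + z ^ 2 := rpow_le_self_of_one_le (by nlinarith) hs
    _ ≤ (1 + 8 * T) * exp (z ^ 2 / (8 * T)) := one_add_sq_le_mul_exp (by linarith) z
    _ ≤ (1 + 8 * T) * exp (z ^ 2 / (8 * t)) := by gcongr; linarith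

lemma heatK_nonneg {t : ℝ} (ht : 0 ≤ t) (z : ℝ) : 0 ≤ heatK t z := by
  unfold heatK; positivity

lemma heatK_eq_mul_exp_neg_mul_sq (t z : ℝ) :
    heatK t z = (4 * π * t) ^ (-(1:ℝ)/2) * exp (-(4 * t)⁻¹ * z ^ 2) := by
  rw [heatK]
  congr 2
  ring

lemma heatK_mul_exp_eq {t : ℝ} (ht : 0 < t) (z : ℝ) :
    heatK t z * exp (z ^ 2 / (8 * t)) = √2 * heatK (2 * t) z := by
  have hpow : (4 * π * t) ^ (-(1:ℝ)/2) = √2 * (4 * π * (2 * t)) ^ (-(1:ℝ)/2) := by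
    rw [show 4 * π * (2 * t) = 2 * (4 * π * t) by ring, mul_rpow zero_le_two (by positivity),
      sqrt_eq_rpow, ← mul_assoc, ← rpow_add zero_lt_two]
    norm_num
  have hexp : -z ^ 2 / (4 * t) + z ^ 2 / (8 * t) = -z ^ 2 / (4 * (2 * t)) := by
    field_simp; ring
  rw [heatK, heatK, mul_assoc, ← exp_add, hexp, hpow, mul_assoc]

lemma integrable_heatK_sub {t : ℝ} (ht : 0 < t) (x : ℝ) :
    Integrable fun y ↦ heatK t (x - y) := by
  simp_rw [heatK_eq_mul_exp_neg_mul_sq]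
  exact ((integrable_exp_neg_mul_sq (by positivity)).comp_sub_left x).const_mul _

lemma integral_heatK_sub {t : ℝ} (ht : 0 < t) (x : ℝ) :
    ∫ y, heatK t (x - y) = 1 := by
  simp_rw [heatK_eq_mul_exp_neg_mul_sq]
  rw [integral_const_mul, integral_sub_left_eq_self (fun z ↦ exp (-(4 * t)⁻¹ * z ^ 2)),
    integral_gaussian, div_inv_eq_mul, show π * (4 * t) = 4 * π * t by ring,
    sqrt_eq_rpow, ← rpow_add (by positivity)]
  norm_num

lemma heatK_mul_weight_le {a t T : ℝ} (ha₀ : -1 ≤ a) (ha₁ : a ≤ 0) (ht : 0 < t) (htT : t ≤ T)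
    (x y : ℝ) :
    heatK t (x - y) * (1 + y ^ 2) ^ a ≤
      2 ^ (-a) * (1 + 8 * T) * √2 * (1 + x ^ 2) ^ a * heatK (2 * t) (x - y) := by
  have hp := heatK_nonneg ht.le (x - y)
  calc heatK t (x - y) * (1 + y ^ 2) ^ a
      ≤ heatK t (x - y) * ((2 * (1 + (x - y) ^ 2)) ^ (-a) * (1 + x ^ 2) ^ a) := by
        gcongr; exact one_add_sq_rpow_le_of_nonpos ha₁ x y
    _ = 2 ^ (-a) * (1 + x ^ 2) ^ a * (heatK t (x - y) * (1 + (x - y) ^ 2) ^ (-a)) := by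
        rw [mul_rpow zero_le_two (by positivity)]; ring
    _ ≤ 2 ^ (-a) * (1 + x ^ 2) ^ a *
          (heatK t (x - y) * ((1 + 8 * T) * exp ((x - y) ^ 2 / (8 * t)))) := by
        gcongr; exact one_add_sq_rpow_le_mul_exp (by linarith) ht htT _
    _ = 2 ^ (-a) * (1 + 8 * T) * √2 * (1 + x ^ 2) ^ a * heatK (2 * t) (x - y) := by
        rw [mul_left_comm (heatK t (x - y)), heatK_mul_exp_eq ht]; ring

lemma integral_heatK_mul_weight_le {a t T : ℝ} (ha₀ : -1 ≤ a) (ha₁ : a ≤ 0) (ht : 0 < t)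
    (htT : t ≤ T) (x : ℝ) :
    ∫ y, heatK t (x - y) * (1 + y ^ 2) ^ a ≤ 2 ^ (-a) * (1 + 8 * T) * √2 * (1 + x ^ 2) ^ a := by
  have h2t : 0 < 2 * t := by positivity
  calc ∫ y, heatK t (x - y) * (1 + y ^ 2) ^ a
      ≤ ∫ y, 2 ^ (-a) * (1 + 8 * T) * √2 * (1 + x ^ 2) ^ a * heatK (2 * t) (x - y) := by
        refine integral_mono_of_nonneg (.of_forall fun y ↦ ?_)
          ((integrable_heatK_sub h2t x).const_mul _)
          (.of_forall (heatK_mul_weight_le ha₀ ha₁ ht htT x))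
        exact mul_nonneg (heatK_nonneg ht.le _) (by positivity)
    _ = 2 ^ (-a) * (1 + 8 * T) * √2 * (1 + x ^ 2) ^ a := by
        rw [integral_const_mul, integral_heatK_sub h2t, mul_one]

theorem stmt_0_general (H cH : ℝ) (hH : 1/4 < H ∧ H < 1/2)
    (T : ℝ) :
    ∃ C : ℝ, ∀ t ∈ Set.Ioc (0:ℝ) T, ∀ x : ℝ,
      (cH * (1 + x ^ 2) ^ (H - 1))⁻¹ *
        ∫ y : ℝ, heatK t (x - y) * (cH * (1 + y ^ 2) ^ (H - 1)) ≤ C := by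
  refine ⟨2 ^ (-(H - 1)) * (1 + 8 * T) * √2, fun t ⟨ht, htT⟩ x ↦ ?_⟩
  have hw : 0 < (1 + x ^ 2) ^ (H - 1) := by positivity
  simp_rw [mul_left_comm _ cH, integral_const_mul]
  rcases eq_or_ne cH 0 with rfl | hc
  · have hT : 0 < T := ht.trans_le htT
    simp only [zero_mul, inv_zero]
    positivity
  rw [mul_inv, mul_mul_mul_comm, inv_mul_cancel₀ hc, one_mul, inv_mul_le_iff₀ hw,
    mul_comm ((1 + x ^ 2) ^ (H - 1))]
  exact integral_heatK_mul_weight_le (by linarith) (by linarith) ht htT x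

theorem stmt_0 (H cH : ℝ) (hH : 1/4 < H ∧ H < 1/2)
    (hnorm : ∫ x : ℝ, cH * (1 + x ^ 2) ^ (H - 1) = 1)
    (T : ℝ) (hT : 0 < T) :
    ∃ C : ℝ, ∀ t ∈ Set.Ioc (0:ℝ) T, ∀ x : ℝ,
      (cH * (1 + x ^ 2) ^ (H - 1))⁻¹ *
        ∫ y : ℝ, heatK t (x - y) * (cH * (1 + y ^ 2) ^ (H - 1)) ≤ C :=
  stmt_0_general H cH hH T
end

section
/- For t > 0 and the heat kernel p_t, define D_t(x,h) = p_t(x+h) - p_t(x). For H ∈ (1/4,1/2), there exists a constant C_H such that ∫_ℝ ∫_ℝ |D_t(x,h)|² |h|^{2H-2} dh dx = C_H t^{H-1} for all t > 0. -/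
open MeasureTheory Real Set

/-- First-order increment of the heat kernel. -/
noncomputable def Dker (t x h : ℝ) : ℝ := heatK t (x + h) - heatK t x

theorem stmt_1 (H : ℝ) (hH : 1/4 < H ∧ H < 1/2) :
    ∃ C : ℝ, ∀ t : ℝ, 0 < t →
      (∫ x : ℝ, ∫ h : ℝ, |Dker t x h| ^ 2 * |h| ^ (2 * H - 2)) = C * t ^ (H - 1) := by
  refine ⟨∫ x : ℝ, ∫ h : ℝ, |Dker 1 x h| ^ 2 * |h| ^ (2 * H - 2), fun t ht => ?_⟩
  set s := Real.sqrt t with hs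
  have hs0 : 0 < s := Real.sqrt_pos.mpr ht
  have hss : s * s = t := Real.mul_self_sqrt ht.le
  -- heat kernel scaling
  have hK : ∀ u : ℝ, heatK t (s * u) = t ^ (-(1:ℝ)/2) * heatK 1 u := by
    intro u
    unfold heatK
    have h1 : (s * u) ^ 2 = t * u ^ 2 := by rw [mul_pow, sq s, hss]
    have h2 : (4 * Real.pi * t) = (4 * Real.pi * 1) * t := by ring
    rw [h1, h2, Real.mul_rpow (by positivity) ht.le]
    have h3 : -(t * u ^ 2) / (4 * t) = -(u ^ 2) / (4 * 1) := by
      field_simp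
    rw [h3]; ring
  -- increment scaling
  have hD : ∀ u v : ℝ, Dker t (s * u) (s * v) = t ^ (-(1:ℝ)/2) * Dker 1 u v := by
    intro u v
    unfold Dker
    rw [← mul_add, hK, hK]
    ring
  -- pointwise scaling of the integrand
  have key : ∀ u v : ℝ,
      |Dker t (s * u) (s * v)| ^ 2 * |s * v| ^ (2 * H - 2)
        = t ^ (H - 2) * (|Dker 1 u v| ^ 2 * |v| ^ (2 * H - 2)) := by
    intro u v
    have htp : (0 : ℝ) < t ^ (-(1:ℝ)/2) := Real.rpow_pos_of_pos ht _
    rw [hD u v, abs_mul, abs_of_pos htp, abs_mul, abs_of_pos hs0, mul_pow,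
      Real.mul_rpow hs0.le (abs_nonneg v)]
    have e1 : (t ^ (-(1:ℝ)/2)) ^ (2:ℕ) = t ^ (-(1:ℝ)) := by
      rw [← Real.rpow_natCast (t ^ (-(1:ℝ)/2)) 2, ← Real.rpow_mul ht.le]
      norm_num
    have e2 : s ^ (2 * H - 2) = t ^ (H - 1) := by
      rw [hs, Real.sqrt_eq_rpow, ← Real.rpow_mul ht.le]
      ring_nf
    have e3 : t ^ (-(1:ℝ)) * t ^ (H - 1) = t ^ (H - 2) := by
      rw [← Real.rpow_add ht]; ring_nf
    rw [e1, e2]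
    calc t ^ (-(1:ℝ)) * |Dker 1 u v| ^ 2 * (t ^ (H-1) * |v| ^ (2*H-2))
        = (t ^ (-(1:ℝ)) * t ^ (H - 1)) * (|Dker 1 u v| ^ 2 * |v| ^ (2*H-2)) := by ring
      _ = t ^ (H - 2) * (|Dker 1 u v| ^ 2 * |v| ^ (2*H-2)) := by rw [e3]
  -- inner integral scaling
  have stepB : ∀ u : ℝ,
      (∫ h : ℝ, |Dker t (s * u) h| ^ 2 * |h| ^ (2 * H - 2))
        = (s * t ^ (H - 2)) * ∫ v : ℝ, |Dker 1 u v| ^ 2 * |v| ^ (2 * H - 2) := by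
    intro u
    have := MeasureTheory.Measure.integral_comp_mul_left
      (fun h : ℝ => |Dker t (s * u) h| ^ 2 * |h| ^ (2 * H - 2)) s
    rw [abs_inv, abs_of_pos hs0, smul_eq_mul] at this
    have h2 : (∫ v : ℝ, |Dker t (s * u) (s * v)| ^ 2 * |s * v| ^ (2 * H - 2))
        = t ^ (H - 2) * ∫ v : ℝ, |Dker 1 u v| ^ 2 * |v| ^ (2 * H - 2) := by
      rw [← MeasureTheory.integral_const_mul]
      exact integral_congr_ae (Filter.Eventually.of_forall fun v => key u v)
    rw [h2] at this
    field_simp at this ⊢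
    linarith [this]
  -- outer integral scaling
  have stepA : (∫ x : ℝ, ∫ h : ℝ, |Dker t x h| ^ 2 * |h| ^ (2 * H - 2))
      = s * ∫ u : ℝ, ∫ h : ℝ, |Dker t (s * u) h| ^ 2 * |h| ^ (2 * H - 2) := by
    have := MeasureTheory.Measure.integral_comp_mul_left
      (fun x : ℝ => ∫ h : ℝ, |Dker t x h| ^ 2 * |h| ^ (2 * H - 2)) s
    rw [abs_inv, abs_of_pos hs0, smul_eq_mul] at this
    rw [this]
    field_simp
  rw [stepA]
  have : (∫ u : ℝ, ∫ h : ℝ, |Dker t (s * u) h| ^ 2 * |h| ^ (2 * H - 2))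
      = (s * t ^ (H - 2)) * ∫ u : ℝ, ∫ v : ℝ, |Dker 1 u v| ^ 2 * |v| ^ (2 * H - 2) := by
    rw [← MeasureTheory.integral_const_mul]
    exact integral_congr_ae (Filter.Eventually.of_forall stepB)
  rw [this]
  have e4 : t * t ^ (H - 2) = t ^ (H - 1) := by
    rw [show H - 1 = 1 + (H - 2) by ring, Real.rpow_add ht, Real.rpow_one]
  calc s * ((s * t ^ (H - 2)) * ∫ u : ℝ, ∫ v : ℝ, |Dker 1 u v| ^ 2 * |v| ^ (2 * H - 2))
      = (t * t ^ (H - 2)) * ∫ u : ℝ, ∫ v : ℝ, |Dker 1 u v| ^ 2 * |v| ^ (2 * H - 2) := by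
        rw [← hss]; ring
    _ = (∫ u : ℝ, ∫ v : ℝ, |Dker 1 u v| ^ 2 * |v| ^ (2 * H - 2)) * t ^ (H - 1) := by
        rw [e4]; ring
end

section
/- For t > 0 and the heat kernel p_t, define □_t(x,y,h) = p_t(x+y+h) - p_t(x+y) - p_t(x+h) + p_t(x). For H ∈ (1/4,1/2), there exists a constant C_H such that ∫_ℝ³ |□_t(x,y,h)|² |h|^{2H-2} |y|^{2H-2} dy dh dx = C_H t^{2H-3/2} for all t > 0. -/
open MeasureTheory Real Set

/-- Second-order rectangular increment of the heat kernel. -/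
noncomputable def BoxKer (t x y h : ℝ) : ℝ :=
  heatK t (x + y + h) - heatK t (x + y) - heatK t (x + h) + heatK t x

private lemma scale_int (g : ℝ → ℝ) {s : ℝ} (hs : 0 < s) :
    ∫ x : ℝ, g x = s * ∫ x : ℝ, g (s * x) := by
  rw [MeasureTheory.Measure.integral_comp_mul_left g s, smul_eq_mul, abs_inv,
    abs_of_pos hs, ← mul_assoc, mul_inv_cancel₀ hs.ne', one_mul]

theorem stmt_2 (H : ℝ) (hH : 1/4 < H ∧ H < 1/2) :
    ∃ C : ℝ, ∀ t : ℝ, 0 < t →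
      (∫ x : ℝ, ∫ h : ℝ, ∫ y : ℝ,
          |BoxKer t x y h| ^ 2 * |h| ^ (2 * H - 2) * |y| ^ (2 * H - 2))
        = C * t ^ (2 * H - 3/2) := by
  refine ⟨∫ x : ℝ, ∫ h : ℝ, ∫ y : ℝ,
      |BoxKer 1 x y h| ^ 2 * |h| ^ (2 * H - 2) * |y| ^ (2 * H - 2), fun t ht => ?_⟩
  set s : ℝ := Real.sqrt t with hs_def
  have hs : 0 < s := Real.sqrt_pos.2 ht
  have hseq : s = t ^ ((1:ℝ)/2) := Real.sqrt_eq_rpow t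
  have hheat : ∀ u : ℝ, heatK t (s * u) = t ^ (-(1:ℝ)/2) * heatK 1 u := by
    intro u
    unfold heatK
    have h1 : (4 * Real.pi * t) ^ (-(1:ℝ)/2)
        = (4 * Real.pi) ^ (-(1:ℝ)/2) * t ^ (-(1:ℝ)/2) := by
      rw [Real.mul_rpow (by positivity) ht.le]
    have h2 : (s * u) ^ 2 / (4 * t) = u ^ 2 / 4 := by
      have : s ^ 2 = t := Real.sq_sqrt ht.le
      field_simp [mul_pow, this]
      rw [this]; ring
    rw [h1, mul_pow, Real.sq_sqrt ht.le,
      show -(t * u ^ 2) / (4 * t) = -(u ^ 2) / (4 * 1) from by field_simp]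
    rw [mul_one]
    ring
  have hbox : ∀ x y h : ℝ, BoxKer t (s * x) (s * y) (s * h)
      = t ^ (-(1:ℝ)/2) * BoxKer 1 x y h := by
    intro x y h
    unfold BoxKer
    rw [show s * x + s * y + s * h = s * (x + y + h) by ring,
      show s * x + s * y = s * (x + y) by ring,
      show s * x + s * h = s * (x + h) by ring,
      hheat, hheat, hheat, hheat]
    ring
  have habs : ∀ x y h : ℝ, |BoxKer t (s * x) (s * y) (s * h)| ^ 2
      = t ^ (-(1:ℝ)) * |BoxKer 1 x y h| ^ 2 := by
    intro x y h
    rw [hbox, abs_mul, mul_pow, abs_of_pos (Real.rpow_pos_of_pos ht _)]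
    congr 1
    rw [← Real.rpow_natCast (t ^ (-(1:ℝ)/2)) 2, ← Real.rpow_mul ht.le]
    norm_num
  have hpow : ∀ u : ℝ, |s * u| ^ (2 * H - 2) = t ^ (H - 1) * |u| ^ (2 * H - 2) := by
    intro u
    rw [abs_mul, abs_of_pos hs, Real.mul_rpow hs.le (abs_nonneg u), hseq,
      ← Real.rpow_mul ht.le]
    ring_nf
  have key : ∀ x y h : ℝ,
      |BoxKer t (s * x) (s * y) (s * h)| ^ 2 * |s * h| ^ (2 * H - 2) * |s * y| ^ (2 * H - 2)
      = t ^ (2 * H - 3) * (|BoxKer 1 x y h| ^ 2 * |h| ^ (2 * H - 2) * |y| ^ (2 * H - 2)) := by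
    intro x y h
    rw [habs, hpow, hpow]
    rw [show t ^ (2 * H - 3) = t ^ (-(1:ℝ)) * t ^ (H - 1) * t ^ (H - 1) by
      rw [← Real.rpow_add ht, ← Real.rpow_add ht]; ring_nf]
    ring
  calc (∫ x : ℝ, ∫ h : ℝ, ∫ y : ℝ,
          |BoxKer t x y h| ^ 2 * |h| ^ (2 * H - 2) * |y| ^ (2 * H - 2))
      = s * ∫ x : ℝ, ∫ h : ℝ, ∫ y : ℝ,
          |BoxKer t (s * x) y h| ^ 2 * |h| ^ (2 * H - 2) * |y| ^ (2 * H - 2) :=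
        scale_int _ hs
    _ = s * ∫ x : ℝ, s * ∫ h : ℝ, ∫ y : ℝ,
          |BoxKer t (s * x) y (s * h)| ^ 2 * |s * h| ^ (2 * H - 2) * |y| ^ (2 * H - 2) := by
        congr 1
        exact integral_congr_ae (Filter.Eventually.of_forall fun x => scale_int _ hs)
    _ = s * ∫ x : ℝ, s * ∫ h : ℝ, s * ∫ y : ℝ,
          |BoxKer t (s * x) (s * y) (s * h)| ^ 2 * |s * h| ^ (2 * H - 2)
            * |s * y| ^ (2 * H - 2) := by
        congr 1
        refine integral_congr_ae (Filter.Eventually.of_forall fun x => ?_)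
        dsimp only
        congr 1
        exact integral_congr_ae (Filter.Eventually.of_forall fun h => scale_int _ hs)
    _ = s * s * s * t ^ (2 * H - 3) * ∫ x : ℝ, ∫ h : ℝ, ∫ y : ℝ,
          |BoxKer 1 x y h| ^ 2 * |h| ^ (2 * H - 2) * |y| ^ (2 * H - 2) := by
        simp only [key, MeasureTheory.integral_const_mul]
        ring
    _ = (∫ x : ℝ, ∫ h : ℝ, ∫ y : ℝ,
          |BoxKer 1 x y h| ^ 2 * |h| ^ (2 * H - 2) * |y| ^ (2 * H - 2)) * t ^ (2 * H - 3/2) := by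
        rw [show s * s * s = t ^ ((3:ℝ)/2) by
          rw [hseq, ← Real.rpow_add ht, ← Real.rpow_add ht]; norm_num]
        rw [mul_comm, ← Real.rpow_add ht]
        ring_nf
end

section
/- Let H ∈ (1/4,1/2), λ(x) = c_H(1+x²)^{H-1} normalized to integrate to 1, and D_t(x,h) = p_t(x+h) - p_t(x). Then for every T > 0 there exists C_{T,H} such that for all 0 < t ≤ T and z ∈ ℝ, ∫_ℝ ∫_ℝ |D_t(x,h)|² |h|^{2H-2} λ(z-x) dx dh ≤ C_{T,H} t^{H-1} λ(z). -/
open MeasureTheory Real Set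

noncomputable def wt (H x : ℝ) : ℝ := (1 + x ^ 2) ^ (H - 1)

lemma wt_pos (H x : ℝ) : 0 < wt H x := Real.rpow_pos_of_pos (by positivity) _

lemma wt_le_one {H : ℝ} (hH1 : H ≤ 1) (x : ℝ) : wt H x ≤ 1 :=
  Real.rpow_le_one_of_one_le_of_nonpos (by nlinarith [sq_nonneg x]) (by linarith)

lemma wt_peetre {H : ℝ} (hH0 : 0 ≤ H) (hH1 : H ≤ 1) (a b : ℝ) :
    wt H (a + b) ≤ 2 * wt H a * (1 + b ^ 2) := by
  set D : ℝ := 2 * (1 + b ^ 2) with hD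
  have hDpos : (0:ℝ) < D := by positivity
  have hD1 : (1:ℝ) ≤ D := by nlinarith [sq_nonneg b]
  have key : (1 + a ^ 2) / D ≤ 1 + (a + b) ^ 2 := by
    rw [div_le_iff₀ hDpos]
    nlinarith [sq_nonneg (a + 2*b), sq_nonneg b, sq_nonneg (a + b), sq_nonneg ((a+b)*b), sq_nonneg (a*b)]
  have h1 : wt H (a + b) ≤ ((1 + a ^ 2) / D) ^ (H - 1) := by
    refine Real.rpow_le_rpow_of_nonpos (by positivity) key (by linarith)
  have h2 : ((1 + a ^ 2) / D) ^ (H - 1) = (1 + a ^ 2) ^ (H - 1) * D ^ (1 - H) := by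
    rw [Real.div_rpow (by positivity) hDpos.le, div_eq_mul_inv, ← Real.rpow_neg hDpos.le]
    ring_nf
  have h3 : D ^ (1 - H) ≤ D := by
    calc D ^ (1 - H) ≤ D ^ (1:ℝ) := Real.rpow_le_rpow_of_exponent_le hD1 (by linarith)
    _ = D := Real.rpow_one D
  calc wt H (a + b) ≤ (1 + a ^ 2) ^ (H - 1) * D ^ (1 - H) := by rw [← h2]; exact h1
  _ ≤ (1 + a ^ 2) ^ (H - 1) * D := by
      have := (wt_pos H a); unfold wt at this
      exact mul_le_mul_of_nonneg_left h3 this.le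
  _ = 2 * wt H a * (1 + b ^ 2) := by unfold wt; ring

lemma one_add_sq_le_exp {b x : ℝ} (hb : 0 < b) : 1 + x ^ 2 ≤ (1 + 1/b) * Real.exp (b * x ^ 2) := by
  have h1 : (1:ℝ) ≤ Real.exp (b * x ^ 2) := by
    rw [Real.one_le_exp_iff]; positivity
  have h2 : b * x ^ 2 ≤ Real.exp (b * x ^ 2) := by
    nlinarith [Real.add_one_le_exp (b * x ^ 2)]
  have h3 : x ^ 2 ≤ (1/b) * Real.exp (b * x ^ 2) := by
    rw [div_mul_eq_mul_div, le_div_iff₀ hb]; linarith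
  nlinarith

lemma exp_diff_le {a b : ℝ} (hab : a ≤ b) :
    |Real.exp (-a) - Real.exp (-b)| ≤ (b - a) * Real.exp (-a) := by
  have h1 : Real.exp (-b) ≤ Real.exp (-a) := Real.exp_le_exp.mpr (by linarith)
  rw [abs_of_nonneg (by linarith)]
  have h2 : 1 - (b - a) ≤ Real.exp (-(b-a)) := by nlinarith [Real.add_one_le_exp (-(b-a))]
  have h3 : Real.exp (-b) = Real.exp (-a) * Real.exp (-(b-a)) := by
    rw [← Real.exp_add]; ring_nf
  nlinarith [Real.exp_pos (-a)]

lemma integrable_gauss {c : ℝ} (hc : 0 < c) :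
    Integrable fun x : ℝ => Real.exp (-(x ^ 2) / c) := by
  have h : ∀ x : ℝ, -(x ^ 2) / c = -c⁻¹ * x ^ 2 := fun x => by field_simp
  simp_rw [h]
  exact integrable_exp_neg_mul_sq (inv_pos.mpr hc)

lemma gauss_int_le {c : ℝ} (hc : 0 < c) :
    ∫ x : ℝ, Real.exp (-(x ^ 2) / c) ≤ 2 * Real.sqrt c := by
  have h : ∀ x : ℝ, -(x ^ 2) / c = -c⁻¹ * x ^ 2 := fun x => by field_simp
  simp_rw [h, integral_gaussian]
  rw [show π / c⁻¹ = π * c from by field_simp]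
  calc Real.sqrt (π * c) ≤ Real.sqrt (4 * c) := by
        apply Real.sqrt_le_sqrt
        nlinarith [Real.pi_le_four]
  _ = 2 * Real.sqrt c := by
        rw [show (4:ℝ) * c = 2^2 * c by norm_num, Real.sqrt_mul (by positivity),
          Real.sqrt_sq (by norm_num)]

lemma integrable_shift {f : ℝ → ℝ} (hf : Integrable f) (a : ℝ) :
    Integrable fun x => f (x + a) := by
  have hm := measurePreserving_add_right (volume : Measure ℝ) a
  exact (hm.integrable_comp hf.aestronglyMeasurable).mpr hf

lemma heatK_sq {t : ℝ} (ht : 0 < t) (y : ℝ) :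
    (heatK t y) ^ 2 = (4 * π * t)⁻¹ * Real.exp (-(y ^ 2) / (2 * t)) := by
  have hpt : (0:ℝ) < 4 * π * t := by positivity
  unfold heatK
  rw [mul_pow, ← Real.rpow_natCast ((4*π*t) ^ (-(1:ℝ)/2)) 2, ← Real.rpow_mul hpt.le]
  norm_num
  rw [Real.rpow_neg_one, show (Real.exp (-(y^2) / (4*t)))^2 = Real.exp (-(y^2)/(4*t) + -(y^2)/(4*t)) from by rw [Real.exp_add]; ring]
  rw [show -(y:ℝ) ^ 2 / (4 * t) + -y ^ 2 / (4 * t) = -y ^ 2 / (2 * t) from by field_simp; ring]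
  ring

lemma absorb {H T t k : ℝ} (hH0 : 0 ≤ H) (hH1 : H ≤ 1) (hT : 0 < T)
    (ht0 : 0 < t) (htT : t ≤ T) (hk : 0 < k) (c y : ℝ) :
    Real.exp (-(y ^ 2) / (k * t)) * wt H (c - y)
      ≤ 2 * (1 + 2 * k * T) * wt H c * Real.exp (-(y ^ 2) / (2 * k * t)) := by
  have hpee : wt H (c - y) ≤ 2 * wt H c * (1 + y ^ 2) := by
    have := wt_peetre hH0 hH1 c (-y)
    simpa [sub_eq_add_neg] using this
  have habs : (1:ℝ) + y ^ 2 ≤ (1 + 2 * k * t) * Real.exp (y ^ 2 / (2 * k * t)) := by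
    have := one_add_sq_le_exp (b := (2 * k * t)⁻¹) (x := y) (by positivity)
    have e1 : (2 * k * t)⁻¹ * y ^ 2 = y ^ 2 / (2 * k * t) := by field_simp
    have e2 : 1 + 1 / (2 * k * t)⁻¹ = 1 + 2 * k * t := by field_simp
    rw [e1, e2] at this
    exact this
  have hexp : Real.exp (-(y ^ 2) / (k * t)) * Real.exp (y ^ 2 / (2 * k * t))
      = Real.exp (-(y ^ 2) / (2 * k * t)) := by
    rw [← Real.exp_add]
    congr 1
    field_simp
    ring
  have h1 : Real.exp (-(y ^ 2) / (k * t)) * wt H (c - y)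
      ≤ Real.exp (-(y ^ 2) / (k * t)) * (2 * wt H c * ((1 + 2*k*t) * Real.exp (y ^ 2 / (2 * k * t)))) := by
    apply mul_le_mul_of_nonneg_left _ (Real.exp_nonneg _)
    calc wt H (c - y) ≤ 2 * wt H c * (1 + y ^ 2) := hpee
    _ ≤ 2 * wt H c * ((1 + 2*k*t) * Real.exp (y ^ 2 / (2 * k * t))) := by
        apply mul_le_mul_of_nonneg_left habs
        have := wt_pos H c; positivity
  calc Real.exp (-(y ^ 2) / (k * t)) * wt H (c - y)
      ≤ Real.exp (-(y ^ 2) / (k * t)) * (2 * wt H c * ((1 + 2*k*t) * Real.exp (y ^ 2 / (2 * k * t)))) := h1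
  _ = 2 * (1 + 2*k*t) * wt H c * (Real.exp (-(y ^ 2) / (k * t)) * Real.exp (y ^ 2 / (2 * k * t))) := by ring
  _ = 2 * (1 + 2*k*t) * wt H c * Real.exp (-(y ^ 2) / (2 * k * t)) := by rw [hexp]
  _ ≤ 2 * (1 + 2*k*T) * wt H c * Real.exp (-(y ^ 2) / (2 * k * t)) := by
      have hw := wt_pos H c
      have he := Real.exp_nonneg (-(y ^ 2) / (2 * k * t))
      have : (1:ℝ) + 2*k*t ≤ 1 + 2*k*T := by nlinarith
      nlinarith [mul_nonneg hw.le he]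

lemma rpow_neg_half {t : ℝ} (ht : 0 < t) : t ^ (-(1:ℝ)/2) = (Real.sqrt t)⁻¹ := by
  rw [Real.sqrt_eq_rpow, ← Real.rpow_neg ht.le]
  norm_num

lemma inner_big {H T : ℝ} (hH0 : 0 ≤ H) (hH1 : H ≤ 1) (hT : 0 < T) {t : ℝ}
    (ht0 : 0 < t) (htT : t ≤ T) (z h : ℝ) :
    ∫ x : ℝ, (Dker t x h) ^ 2 * wt H (z - x)
      ≤ 2 * (1 + 4 * T) * t ^ (-(1:ℝ)/2) * (wt H z + wt H (z + h)) := by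
  have ht4 : (0:ℝ) < 4 * t := by linarith
  set B : ℝ := (4 * π * t)⁻¹ * 4 * (1 + 4 * T) with hB
  have hBpos : 0 < B := by rw [hB]; positivity
  set g : ℝ → ℝ := fun x => B * (wt H z * Real.exp (-(x ^ 2) / (4 * t))
    + wt H (z + h) * Real.exp (-((x + h) ^ 2) / (4 * t))) with hg
  have hwz := wt_pos H z
  have hwzh := wt_pos H (z + h)
  -- pointwise bound
  have hpt : ∀ x : ℝ, (Dker t x h) ^ 2 * wt H (z - x) ≤ g x := by
    intro x
    have hsq : (Dker t x h) ^ 2 ≤ 2 * (heatK t (x + h)) ^ 2 + 2 * (heatK t x) ^ 2 := by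
      unfold Dker; nlinarith [sq_nonneg (heatK t (x+h) + heatK t x)]
    have hwnn := (wt_pos H (z - x)).le
    have step1 : (Dker t x h) ^ 2 * wt H (z - x)
        ≤ 2 * ((heatK t (x+h)) ^ 2 * wt H (z - x)) + 2 * ((heatK t x) ^ 2 * wt H (z - x)) := by
      nlinarith [sq_nonneg (Dker t x h)]
    have habs1 : (heatK t x) ^ 2 * wt H (z - x)
        ≤ (4 * π * t)⁻¹ * (2 * (1 + 4 * T) * wt H z * Real.exp (-(x ^ 2) / (4 * t))) := by
      rw [heatK_sq ht0, mul_assoc]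
      apply mul_le_mul_of_nonneg_left _ (by positivity)
      have := absorb hH0 hH1 hT ht0 htT (k := 2) (by norm_num) z x
      calc Real.exp (-(x ^ 2) / (2 * t)) * wt H (z - x)
          ≤ 2 * (1 + 2 * 2 * T) * wt H z * Real.exp (-(x ^ 2) / (2 * 2 * t)) := this
      _ = 2 * (1 + 4 * T) * wt H z * Real.exp (-(x ^ 2) / (4 * t)) := by norm_num
    have habs2 : (heatK t (x + h)) ^ 2 * wt H (z - x)
        ≤ (4 * π * t)⁻¹ * (2 * (1 + 4 * T) * wt H (z + h) * Real.exp (-((x + h) ^ 2) / (4 * t))) := by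
      rw [heatK_sq ht0, mul_assoc]
      apply mul_le_mul_of_nonneg_left _ (by positivity)
      have := absorb hH0 hH1 hT ht0 htT (k := 2) (by norm_num) (z + h) (x + h)
      rw [show z + h - (x + h) = z - x by ring] at this
      calc Real.exp (-((x + h) ^ 2) / (2 * t)) * wt H (z - x)
          ≤ 2 * (1 + 2 * 2 * T) * wt H (z + h) * Real.exp (-((x + h) ^ 2) / (2 * 2 * t)) := this
      _ = 2 * (1 + 4 * T) * wt H (z + h) * Real.exp (-((x + h) ^ 2) / (4 * t)) := by norm_num
    calc (Dker t x h) ^ 2 * wt H (z - x)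
        ≤ 2 * ((heatK t (x+h)) ^ 2 * wt H (z - x)) + 2 * ((heatK t x) ^ 2 * wt H (z - x)) := step1
    _ ≤ 2 * ((4 * π * t)⁻¹ * (2 * (1 + 4 * T) * wt H (z + h) * Real.exp (-((x + h) ^ 2) / (4 * t))))
        + 2 * ((4 * π * t)⁻¹ * (2 * (1 + 4 * T) * wt H z * Real.exp (-(x ^ 2) / (4 * t)))) := by
        have := habs1; have := habs2; linarith
    _ = g x := by rw [hg, hB]; ring
  -- integrability of g
  have hint1 : Integrable fun x : ℝ => Real.exp (-(x ^ 2) / (4 * t)) := integrable_gauss ht4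
  have hint2 : Integrable fun x : ℝ => Real.exp (-((x + h) ^ 2) / (4 * t)) :=
    integrable_shift hint1 h
  have hgint : Integrable g := (((hint1.const_mul _).add (hint2.const_mul _)).const_mul B)
  -- integral bound
  have hmono : ∫ x : ℝ, (Dker t x h) ^ 2 * wt H (z - x) ≤ ∫ x, g x := by
    refine integral_mono_of_nonneg ?_ hgint ?_
    · exact Filter.Eventually.of_forall fun x => mul_nonneg (sq_nonneg _) (wt_pos H _).le
    · exact Filter.Eventually.of_forall hpt
  have hIg : ∫ x, g x = B * (wt H z * (∫ x : ℝ, Real.exp (-(x ^ 2) / (4 * t)))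
      + wt H (z + h) * (∫ x : ℝ, Real.exp (-((x + h) ^ 2) / (4 * t)))) := by
    rw [hg, integral_const_mul, integral_add (hint1.const_mul _) (hint2.const_mul _),
      integral_const_mul, integral_const_mul]
  have hshift : (∫ x : ℝ, Real.exp (-((x + h) ^ 2) / (4 * t)))
      = ∫ x : ℝ, Real.exp (-(x ^ 2) / (4 * t)) :=
    integral_add_right_eq_self (fun u : ℝ => Real.exp (-(u ^ 2) / (4 * t))) h
  set s : ℝ := Real.sqrt t with hs
  have hspos : 0 < s := Real.sqrt_pos.mpr ht0
  have hs2 : s ^ 2 = t := Real.sq_sqrt ht0.le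
  have hIgauss : (∫ x : ℝ, Real.exp (-(x ^ 2) / (4 * t))) ≤ 4 * s := by
    calc (∫ x : ℝ, Real.exp (-(x ^ 2) / (4 * t))) ≤ 2 * Real.sqrt (4 * t) := gauss_int_le ht4
    _ = 4 * s := by
        rw [show (4:ℝ) * t = 2 ^ 2 * t by norm_num, Real.sqrt_mul (by positivity),
          Real.sqrt_sq (by norm_num)]
        ring
  have hIgauss0 : 0 ≤ ∫ x : ℝ, Real.exp (-(x ^ 2) / (4 * t)) :=
    integral_nonneg fun x => Real.exp_nonneg _
  have hcoef : B * (4 * s) ≤ 2 * (1 + 4 * T) * t ^ (-(1:ℝ)/2) := by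
    rw [rpow_neg_half ht0, ← hs]
    rw [hB]
    have hpi := Real.pi_gt_three
    rw [show (4 * π * t)⁻¹ * 4 * (1 + 4 * T) * (4 * s) = (1 + 4*T) * (16 * s * (4 * π * t)⁻¹) by ring,
      show 2 * (1 + 4 * T) * s⁻¹ = (1 + 4*T) * (2 * s⁻¹) by ring]
    apply mul_le_mul_of_nonneg_left _ (by linarith)
    rw [inv_eq_one_div, inv_eq_one_div, mul_one_div, mul_one_div, div_le_div_iff₀ (by positivity) hspos]
    nlinarith [hs2, hspos]
  calc ∫ x : ℝ, (Dker t x h) ^ 2 * wt H (z - x) ≤ ∫ x, g x := hmono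
  _ = B * (wt H z * (∫ x : ℝ, Real.exp (-(x ^ 2) / (4 * t)))
      + wt H (z + h) * (∫ x : ℝ, Real.exp (-(x ^ 2) / (4 * t)))) := by rw [hIg, hshift]
  _ ≤ B * (wt H z * (4 * s) + wt H (z + h) * (4 * s)) := by
      apply mul_le_mul_of_nonneg_left _ hBpos.le
      have h1 := mul_le_mul_of_nonneg_left hIgauss hwz.le
      have h2 := mul_le_mul_of_nonneg_left hIgauss hwzh.le
      linarith
  _ = (B * (4 * s)) * (wt H z + wt H (z + h)) := by ring
  _ ≤ (2 * (1 + 4 * T) * t ^ (-(1:ℝ)/2)) * (wt H z + wt H (z + h)) := by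
      apply mul_le_mul_of_nonneg_right hcoef (by positivity)

lemma coef_sq {t : ℝ} (ht : 0 < t) : ((4 * π * t) ^ (-(1:ℝ)/2)) ^ 2 = (4 * π * t)⁻¹ := by
  have hpt : (0:ℝ) < 4 * π * t := by positivity
  rw [← Real.rpow_natCast ((4*π*t) ^ (-(1:ℝ)/2)) 2, ← Real.rpow_mul hpt.le]
  norm_num
  rw [Real.rpow_neg_one]
  rw [mul_inv, mul_inv]
  ring

set_option maxHeartbeats 1000000 in
lemma dker_sq_small {t : ℝ} (ht0 : 0 < t) {h : ℝ} (hh : |h| ≤ Real.sqrt t) (x : ℝ) :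
    (Dker t x h) ^ 2 ≤ (4 * π * t)⁻¹ * (13 * h ^ 2 / t) * Real.exp (-(x ^ 2) / (8 * t)) := by
  have hh2 : h ^ 2 ≤ t := by
    have := Real.sq_sqrt ht0.le
    nlinarith [sq_abs h, abs_nonneg h, Real.sqrt_nonneg t]
  set a : ℝ := (x + h) ^ 2 / (4 * t) with ha
  set b : ℝ := x ^ 2 / (4 * t) with hb
  have ha0 : 0 ≤ a := by positivity
  have hb0 : 0 ≤ b := by positivity
  set m : ℝ := min a b with hm
  have hDk : Dker t x h = (4 * π * t) ^ (-(1:ℝ)/2) * (Real.exp (-a) - Real.exp (-b)) := by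
    unfold Dker heatK
    rw [ha, hb]
    rw [show -((x+h)^2) / (4*t) = -((x+h)^2/(4*t)) by ring, show -(x^2) / (4*t) = -(x^2/(4*t)) by ring]
    ring
  have hDsq : (Dker t x h) ^ 2 = (4 * π * t)⁻¹ * (Real.exp (-a) - Real.exp (-b)) ^ 2 := by
    rw [hDk, mul_pow, coef_sq ht0]
  have hdiff : |Real.exp (-a) - Real.exp (-b)| ≤ |a - b| * Real.exp (-m) := by
    rcases le_total a b with hab | hab
    · have := exp_diff_le hab
      rw [hm, min_eq_left hab, abs_of_nonpos (by linarith : a - b ≤ 0)]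
      calc |Real.exp (-a) - Real.exp (-b)| ≤ (b - a) * Real.exp (-a) := this
      _ = -(a - b) * Real.exp (-a) := by ring
    · have h' := exp_diff_le hab
      rw [hm, min_eq_right hab, abs_of_nonneg (by linarith : (0:ℝ) ≤ a - b),
        abs_sub_comm (Real.exp (-a)) (Real.exp (-b))]
      exact h'
  have hsq2 : (Real.exp (-a) - Real.exp (-b)) ^ 2 ≤ (a - b) ^ 2 * (Real.exp (-m)) ^ 2 := by
    have h1 : |Real.exp (-a) - Real.exp (-b)| ^ 2 ≤ (|a - b| * Real.exp (-m)) ^ 2 := by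
      apply pow_le_pow_left₀ (abs_nonneg _) hdiff
    rw [sq_abs] at h1
    calc (Real.exp (-a) - Real.exp (-b)) ^ 2 ≤ (|a - b| * Real.exp (-m)) ^ 2 := h1
    _ = (a - b) ^ 2 * (Real.exp (-m)) ^ 2 := by rw [mul_pow, sq_abs]
  -- bound on (a-b)^2
  have hab2 : (a - b) ^ 2 = h ^ 2 * (2 * x + h) ^ 2 / (16 * t ^ 2) := by
    rw [ha, hb]; field_simp; ring
  -- exp(-m)^2 ≤ 3 * exp(-(x^2)/(4t))
  have hmlow : x ^ 2 / (4 * t) - 1 / 2 ≤ 2 * m := by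
    have h1 : (x ^ 2 / 2 - h ^ 2) / (4 * t) ≤ a := by
      rw [ha, div_le_div_iff_of_pos_right (by linarith)]
      nlinarith [sq_nonneg (x + 2 * h)]
    have h2 : (x ^ 2 / 2 - h ^ 2) / (4 * t) ≤ b := by
      rw [hb, div_le_div_iff_of_pos_right (by linarith)]
      nlinarith [sq_nonneg h]
    have h3 : (x ^ 2 / 2 - h ^ 2) / (4 * t) ≤ m := le_min h1 h2
    have h4 : (x ^ 2 / 2 - t) / (4 * t) ≤ (x ^ 2 / 2 - h ^ 2) / (4 * t) := by
      apply div_le_div_of_nonneg_right ?_ (by linarith)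
      · linarith
    have h5 : x ^ 2 / (4 * t) - 1 / 2 = 2 * ((x ^ 2 / 2 - t) / (4 * t)) := by
      field_simp
      ring
    linarith
  have hexpm : (Real.exp (-m)) ^ 2 ≤ 3 * Real.exp (-(x ^ 2) / (8 * t)) * Real.exp (-(x ^ 2) / (8 * t)) := by
    have e1 : (Real.exp (-m)) ^ 2 = Real.exp (-(2 * m)) := by
      rw [sq, ← Real.exp_add]
      congr 1
      ring
    have e2 : Real.exp (-(2 * m)) ≤ Real.exp (1 / 2 - x ^ 2 / (4 * t)) := by
      apply Real.exp_le_exp.mpr; linarith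
    have e3 : Real.exp (1 / 2 - x ^ 2 / (4 * t))
        = Real.exp (1 / 2) * (Real.exp (-(x ^ 2) / (8 * t)) * Real.exp (-(x ^ 2) / (8 * t))) := by
      rw [← Real.exp_add, ← Real.exp_add]
      congr 1
      field_simp
      ring
    have e4 : Real.exp (1 / 2 : ℝ) ≤ 3 := by
      calc Real.exp (1/2 : ℝ) ≤ Real.exp 1 := Real.exp_le_exp.mpr (by norm_num)
      _ ≤ 2.7182818286 := Real.exp_one_lt_d9.le
      _ ≤ 3 := by norm_num
    rw [e1]
    calc Real.exp (-(2 * m)) ≤ Real.exp (1 / 2 - x ^ 2 / (4 * t)) := e2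
    _ = Real.exp (1/2) * (Real.exp (-(x ^ 2) / (8 * t)) * Real.exp (-(x ^ 2) / (8 * t))) := e3
    _ ≤ 3 * Real.exp (-(x ^ 2) / (8 * t)) * Real.exp (-(x ^ 2) / (8 * t)) := by
        have := Real.exp_pos (-(x ^ 2) / (8 * t))
        nlinarith [Real.exp_pos (-(x ^ 2) / (8 * t))]
  -- (2x+h)^2 * exp(-(x^2)/(8t)) ≤ 66 t
  have hP : (2 * x + h) ^ 2 * Real.exp (-(x ^ 2) / (8 * t)) ≤ 66 * t := by
    have h8 : (0:ℝ) < 8 * t := by linarith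
    have hx2 : x ^ 2 ≤ 8 * t * Real.exp (x ^ 2 / (8 * t)) := by
      have h0 := Real.add_one_le_exp (x ^ 2 / (8 * t))
      have hdiv : x ^ 2 / (8 * t) ≤ Real.exp (x ^ 2 / (8 * t)) := by linarith
      have := (div_le_iff₀ h8).mp hdiv
      linarith
    have h66 : (2 * x + h) ^ 2 ≤ 66 * t * Real.exp (x ^ 2 / (8 * t)) := by
      have he1 : (1:ℝ) ≤ Real.exp (x ^ 2 / (8 * t)) := by
        rw [Real.one_le_exp_iff]; positivity
      nlinarith [sq_nonneg (2 * x - h), mul_nonneg ht0.le (sub_nonneg.mpr he1), hx2, hh2]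
    have hPQ : Real.exp (x ^ 2 / (8 * t)) * Real.exp (-(x ^ 2) / (8 * t)) = 1 := by
      rw [← Real.exp_add]; ring_nf; exact Real.exp_zero
    calc (2 * x + h) ^ 2 * Real.exp (-(x ^ 2) / (8 * t))
        ≤ (66 * t * Real.exp (x ^ 2 / (8 * t))) * Real.exp (-(x ^ 2) / (8 * t)) := by
          apply mul_le_mul_of_nonneg_right h66 (Real.exp_nonneg _)
    _ = 66 * t * (Real.exp (x ^ 2 / (8 * t)) * Real.exp (-(x ^ 2) / (8 * t))) := by ring
    _ = 66 * t := by rw [hPQ]; ring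
  -- combine
  have hQ0 : 0 ≤ Real.exp (-(x ^ 2) / (8 * t)) := Real.exp_nonneg _
  have final : (a - b) ^ 2 * (Real.exp (-m)) ^ 2
      ≤ 13 * h ^ 2 / t * Real.exp (-(x ^ 2) / (8 * t)) := by
    rw [hab2]
    calc h ^ 2 * (2*x+h) ^ 2 / (16 * t ^ 2) * ((Real.exp (-m)) ^ 2)
        ≤ h ^ 2 * (2*x+h) ^ 2 / (16 * t ^ 2)
          * (3 * Real.exp (-(x ^ 2) / (8 * t)) * Real.exp (-(x ^ 2) / (8 * t))) := by
          apply mul_le_mul_of_nonneg_left hexpm (by positivity)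
    _ = (3 * h ^ 2 / (16 * t ^ 2) * Real.exp (-(x ^ 2) / (8 * t)))
          * ((2*x+h) ^ 2 * Real.exp (-(x ^ 2) / (8 * t))) := by ring
    _ ≤ (3 * h ^ 2 / (16 * t ^ 2) * Real.exp (-(x ^ 2) / (8 * t))) * (66 * t) := by
          apply mul_le_mul_of_nonneg_left hP (by positivity)
    _ = 198 / 16 * (h ^ 2 / t) * Real.exp (-(x ^ 2) / (8 * t)) := by
          field_simp
          ring
    _ ≤ 13 * h ^ 2 / t * Real.exp (-(x ^ 2) / (8 * t)) := by
          have hQ1 : (0:ℝ) ≤ h ^ 2 / t * Real.exp (-(x ^ 2) / (8 * t)) := by positivity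
          have h13 := mul_le_mul_of_nonneg_right (show (198:ℝ)/16 ≤ 13 by norm_num) hQ1
          calc (198:ℝ) / 16 * (h ^ 2 / t) * Real.exp (-(x ^ 2) / (8 * t))
              = 198 / 16 * (h ^ 2 / t * Real.exp (-(x ^ 2) / (8 * t))) := by ring
          _ ≤ 13 * (h ^ 2 / t * Real.exp (-(x ^ 2) / (8 * t))) := h13
          _ = 13 * h ^ 2 / t * Real.exp (-(x ^ 2) / (8 * t)) := by ring
  rw [hDsq]
  calc (4 * π * t)⁻¹ * (Real.exp (-a) - Real.exp (-b)) ^ 2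
      ≤ (4 * π * t)⁻¹ * ((a - b) ^ 2 * (Real.exp (-m)) ^ 2) := by
        apply mul_le_mul_of_nonneg_left hsq2 (by positivity)
  _ ≤ (4 * π * t)⁻¹ * (13 * h ^ 2 / t * Real.exp (-(x ^ 2) / (8 * t))) := by
        apply mul_le_mul_of_nonneg_left final (by positivity)
  _ = (4 * π * t)⁻¹ * (13 * h ^ 2 / t) * Real.exp (-(x ^ 2) / (8 * t)) := by ring

lemma inner_small {H T : ℝ} (hH0 : 0 ≤ H) (hH1 : H ≤ 1) (hT : 0 < T) {t : ℝ}
    (ht0 : 0 < t) (htT : t ≤ T) (z : ℝ) {h : ℝ} (hh : |h| ≤ Real.sqrt t) :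
    ∫ x : ℝ, (Dker t x h) ^ 2 * wt H (z - x)
      ≤ 18 * (1 + 16 * T) * h ^ 2 * (Real.sqrt t)⁻¹ * t⁻¹ * wt H z := by
  have ht16 : (0:ℝ) < 16 * t := by linarith
  have hwz := wt_pos H z
  set B : ℝ := (4 * π * t)⁻¹ * (13 * h ^ 2 / t) * (2 * (1 + 16 * T)) * wt H z with hB
  have hBnn : 0 ≤ B := by
    rw [hB]
    have := wt_pos H z
    positivity
  set g : ℝ → ℝ := fun x => B * Real.exp (-(x ^ 2) / (16 * t)) with hg
  have hpt : ∀ x : ℝ, (Dker t x h) ^ 2 * wt H (z - x) ≤ g x := by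
    intro x
    have h1 := dker_sq_small ht0 hh x
    have h2 : (Dker t x h) ^ 2 * wt H (z - x)
        ≤ (4 * π * t)⁻¹ * (13 * h ^ 2 / t) * (Real.exp (-(x ^ 2) / (8 * t)) * wt H (z - x)) := by
      have hw := (wt_pos H (z - x)).le
      calc (Dker t x h) ^ 2 * wt H (z - x)
          ≤ ((4 * π * t)⁻¹ * (13 * h ^ 2 / t) * Real.exp (-(x ^ 2) / (8 * t))) * wt H (z - x) :=
            mul_le_mul_of_nonneg_right h1 hw
      _ = (4 * π * t)⁻¹ * (13 * h ^ 2 / t) * (Real.exp (-(x ^ 2) / (8 * t)) * wt H (z - x)) := by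
            ring
    have h3 := absorb hH0 hH1 hT ht0 htT (k := 8) (by norm_num) z x
    calc (Dker t x h) ^ 2 * wt H (z - x)
        ≤ (4 * π * t)⁻¹ * (13 * h ^ 2 / t) * (Real.exp (-(x ^ 2) / (8 * t)) * wt H (z - x)) := h2
    _ ≤ (4 * π * t)⁻¹ * (13 * h ^ 2 / t)
          * (2 * (1 + 2 * 8 * T) * wt H z * Real.exp (-(x ^ 2) / (2 * 8 * t))) := by
        apply mul_le_mul_of_nonneg_left h3 (by positivity)
    _ = g x := by
        rw [hg, hB]
        norm_num
        ring
  have hint : Integrable fun x : ℝ => Real.exp (-(x ^ 2) / (16 * t)) := integrable_gauss ht16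
  have hgint : Integrable g := hint.const_mul B
  have hmono : ∫ x : ℝ, (Dker t x h) ^ 2 * wt H (z - x) ≤ ∫ x, g x := by
    refine integral_mono_of_nonneg ?_ hgint (Filter.Eventually.of_forall hpt)
    exact Filter.Eventually.of_forall fun x => mul_nonneg (sq_nonneg _) (wt_pos H _).le
  set s : ℝ := Real.sqrt t with hs
  have hspos : 0 < s := Real.sqrt_pos.mpr ht0
  have hs2 : s ^ 2 = t := Real.sq_sqrt ht0.le
  have hIg : ∫ x, g x = B * ∫ x : ℝ, Real.exp (-(x ^ 2) / (16 * t)) := by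
    rw [hg, integral_const_mul]
  have hIgauss : (∫ x : ℝ, Real.exp (-(x ^ 2) / (16 * t))) ≤ 8 * s := by
    calc (∫ x : ℝ, Real.exp (-(x ^ 2) / (16 * t))) ≤ 2 * Real.sqrt (16 * t) := gauss_int_le ht16
    _ = 8 * s := by
        rw [show (16:ℝ) * t = 4 ^ 2 * t by norm_num, Real.sqrt_mul (by positivity),
          Real.sqrt_sq (by norm_num)]
        ring
  calc ∫ x : ℝ, (Dker t x h) ^ 2 * wt H (z - x) ≤ ∫ x, g x := hmono
  _ = B * ∫ x : ℝ, Real.exp (-(x ^ 2) / (16 * t)) := hIg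
  _ ≤ B * (8 * s) := mul_le_mul_of_nonneg_left hIgauss hBnn
  _ ≤ 18 * (1 + 16 * T) * h ^ 2 * s⁻¹ * t⁻¹ * wt H z := by
      rw [hB]
      have hpi := Real.pi_gt_three
      have hTnn : (0:ℝ) ≤ 1 + 16 * T := by linarith
      have key : (4 * π * t)⁻¹ * (13 / t) * 2 * (8 * s) ≤ 18 * s⁻¹ * t⁻¹ := by
        rw [show (4 * π * t)⁻¹ * (13 / t) * 2 * (8 * s) = 208 * s / (4 * π * t * t) by
          field_simp; ring]
        rw [show (18:ℝ) * s⁻¹ * t⁻¹ = 18 / (s * t) by rw [div_eq_mul_inv, mul_inv]; ring]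
        rw [div_le_div_iff₀ (by positivity) (by positivity)]
        have : s * s = t := by nlinarith [hs2]
        nlinarith [hspos, ht0, mul_pos hspos ht0, mul_pos (mul_pos hspos ht0) ht0]
      calc (4 * π * t)⁻¹ * (13 * h ^ 2 / t) * (2 * (1 + 16 * T)) * wt H z * (8 * s)
          = ((4 * π * t)⁻¹ * (13 / t) * 2 * (8 * s)) * (h ^ 2 * (1 + 16 * T) * wt H z) := by
            field_simp
      _ ≤ (18 * s⁻¹ * t⁻¹) * (h ^ 2 * (1 + 16 * T) * wt H z) := by
            apply mul_le_mul_of_nonneg_right key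
            positivity
      _ = 18 * (1 + 16 * T) * h ^ 2 * s⁻¹ * t⁻¹ * wt H z := by ring

lemma integrable_comp_abs' {f : ℝ → ℝ} (hf : IntegrableOn f (Ioi 0)) :
    Integrable fun x => f |x| := by
  have hf' : IntegrableOn (fun x => f |x|) (Ioi 0) := by
    apply hf.congr_fun (fun x hx => ?_) measurableSet_Ioi
    rw [abs_eq_self.mpr (le_of_lt hx)]
  have m : MeasurableEmbedding fun x : ℝ => -x :=
    (Homeomorph.neg ℝ).isClosedEmbedding.measurableEmbedding
  have int_Iic : IntegrableOn (fun x => f |x|) (Iic 0) := by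
    rw [← Measure.map_neg_eq_self (volume : Measure ℝ)]
    rw [m.integrableOn_map_iff]
    simp_rw [Function.comp_def, abs_neg, neg_preimage, neg_Iic, neg_zero]
    exact (integrableOn_Ici_iff_integrableOn_Ioi).mpr hf'
  have := int_Iic.union hf'
  rwa [Iic_union_Ioi, integrableOn_univ] at this

lemma tail_int {c r : ℝ} (hc : 0 < c) (hr : r < -1) :
    Integrable (fun h : ℝ => Set.indicator (Ioi c) (fun v => v ^ r) |h|) ∧
    ∫ h : ℝ, Set.indicator (Ioi c) (fun v => v ^ r) |h| = 2 * (-c ^ (r+1) / (r+1)) := by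
  have hIO : IntegrableOn (fun v : ℝ => v ^ r) (Ioi c) := integrableOn_Ioi_rpow_of_lt hr hc
  have hind : Integrable (Set.indicator (Ioi c) (fun v : ℝ => v ^ r)) :=
    (integrable_indicator_iff measurableSet_Ioi).mpr hIO
  constructor
  · exact integrable_comp_abs' hind.integrableOn
  · rw [integral_comp_abs]
    rw [setIntegral_indicator measurableSet_Ioi,
      Set.inter_eq_self_of_subset_right (Ioi_subset_Ioi hc.le),
      integral_Ioi_rpow_of_lt hr hc]

lemma rpow_prod_bound {H t h : ℝ} (hH0 : 0 < H) (hH1 : H < 1) (ht0 : 0 < t)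
    (hh : |h| ≤ Real.sqrt t) : |h| ^ (2*H-2) * h ^ 2 ≤ t ^ H := by
  rcases eq_or_ne h 0 with h0 | h0
  · rw [h0]
    norm_num
    positivity
  · have habs : 0 < |h| := abs_pos.mpr h0
    have e1 : |h| ^ (2*H-2) * h ^ 2 = |h| ^ (2*H) := by
      rw [← sq_abs, ← Real.rpow_natCast |h| 2, ← Real.rpow_add habs]
      norm_num
    rw [e1]
    calc |h| ^ (2*H) ≤ (Real.sqrt t) ^ (2*H) :=
          Real.rpow_le_rpow (abs_nonneg h) hh (by linarith)
    _ = t ^ H := by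
        rw [Real.sqrt_eq_rpow, ← Real.rpow_mul ht0.le]
        congr 1
        ring

lemma wt_ge_half {H : ℝ} (hH0 : 0 ≤ H) (hH1 : H ≤ 1) {z : ℝ} (hz : |z| ≤ 1) : 1/2 ≤ wt H z := by
  have h2 : 1 + z ^ 2 ≤ 2 := by nlinarith [sq_abs z, abs_nonneg z]
  have hlow : (2:ℝ) ^ (H-1) ≤ (1 + z ^ 2) ^ (H-1) :=
    Real.rpow_le_rpow_of_nonpos (by positivity) h2 (by linarith)
  have h3 : (2:ℝ) ^ (-1:ℝ) ≤ (2:ℝ) ^ (H-1) :=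
    Real.rpow_le_rpow_of_exponent_le (by norm_num) (by linarith)
  have h4 : (2:ℝ) ^ (-1:ℝ) = 1/2 := by
    rw [Real.rpow_neg_one]; norm_num
  unfold wt
  rw [← h4]
  exact le_trans h3 hlow

lemma quarter_bound {H : ℝ} (hH0 : 0 ≤ H) (hH1 : H ≤ 1) {u z : ℝ} (hu : |z|/2 ≤ |u|) :
    wt H u ≤ 4 * wt H z := by
  have h1 : (1 + z ^ 2) / 4 ≤ 1 + u ^ 2 := by
    nlinarith [sq_abs z, sq_abs u, abs_nonneg z, abs_nonneg u, hu,
      mul_self_le_mul_self (by positivity : (0:ℝ) ≤ |z|/2) hu]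
  have h2 : wt H u ≤ ((1 + z ^ 2) / 4) ^ (H - 1) :=
    Real.rpow_le_rpow_of_nonpos (by positivity) h1 (by linarith)
  have h3 : ((1 + z ^ 2) / 4) ^ (H - 1) = (1 + z ^ 2) ^ (H - 1) * 4 ^ (1 - H) := by
    rw [Real.div_rpow (by positivity) (by norm_num), div_eq_mul_inv,
      ← Real.rpow_neg (by norm_num : (0:ℝ) ≤ 4)]
    ring_nf
  have h4 : (4:ℝ) ^ (1 - H) ≤ 4 := by
    calc (4:ℝ) ^ (1-H) ≤ (4:ℝ) ^ (1:ℝ) :=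
          Real.rpow_le_rpow_of_exponent_le (by norm_num) (by linarith)
    _ = 4 := Real.rpow_one 4
  have hwz := wt_pos H z
  unfold wt at *
  calc (1 + u ^ 2) ^ (H - 1) ≤ (1 + z ^ 2) ^ (H - 1) * 4 ^ (1 - H) := by rw [← h3]; exact h2
  _ ≤ (1 + z ^ 2) ^ (H - 1) * 4 := mul_le_mul_of_nonneg_left h4 (by positivity)
  _ = 4 * (1 + z ^ 2) ^ (H - 1) := by ring

lemma abs_rpow_le_wt {H : ℝ} (hH0 : 0 ≤ H) (hH2 : H ≤ 1/2) {z u : ℝ}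
    (hz : 1 ≤ |z|) (hu : |z|/2 ≤ |u|) : |u| ^ (2*H-2) ≤ 8 * wt H z := by
  have hz2 : (0:ℝ) < |z|/2 := by linarith
  have h1 : |u| ^ (2*H-2) ≤ (|z|/2) ^ (2*H-2) :=
    Real.rpow_le_rpow_of_nonpos hz2 hu (by linarith)
  have h2 : (|z|/2) ^ (2*H-2) = |z| ^ (2*H-2) * 2 ^ (2-2*H) := by
    rw [Real.div_rpow (abs_nonneg z) (by norm_num), div_eq_mul_inv,
      ← Real.rpow_neg (by norm_num : (0:ℝ) ≤ 2)]
    ring_nf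
  have h3 : |z| ^ (2*H-2) ≤ 2 ^ (1-H) * wt H z := by
    have hzz : 1 + z ^ 2 ≤ 2 * z ^ 2 := by nlinarith [sq_abs z, abs_nonneg z]
    have ha : (2 * z ^ 2) ^ (H-1) ≤ (1 + z ^ 2) ^ (H-1) :=
      Real.rpow_le_rpow_of_nonpos (by positivity) hzz (by linarith)
    have hb : (2 * z ^ 2) ^ (H-1) = 2 ^ (H-1) * |z| ^ (2*H-2) := by
      rw [Real.mul_rpow (by norm_num) (sq_nonneg z), ← sq_abs z,
        ← Real.rpow_natCast |z| 2, ← Real.rpow_mul (abs_nonneg z)]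
      congr 1
      push_cast
      ring
    have hc : (0:ℝ) ≤ 2 ^ (1-H) := by positivity
    have hd := mul_le_mul_of_nonneg_left (hb ▸ ha) hc
    have he : (2:ℝ) ^ (1-H) * (2 ^ (H-1) * |z| ^ (2*H-2)) = |z| ^ (2*H-2) := by
      rw [← mul_assoc, ← Real.rpow_add (by norm_num : (0:ℝ) < 2)]
      norm_num
    rw [he] at hd
    unfold wt
    exact hd
  have h4 : (2:ℝ) ^ (2-2*H) ≤ 4 := by
    calc (2:ℝ) ^ (2-2*H) ≤ (2:ℝ) ^ (2:ℝ) :=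
          Real.rpow_le_rpow_of_exponent_le (by norm_num) (by linarith)
    _ = 4 := by
        rw [show (2:ℝ) = ((2:ℕ):ℝ) from by norm_num, Real.rpow_natCast]
        norm_num
  have h5 : (2:ℝ) ^ (1-H) ≤ 2 := by
    calc (2:ℝ) ^ (1-H) ≤ (2:ℝ) ^ (1:ℝ) :=
          Real.rpow_le_rpow_of_exponent_le (by norm_num) (by linarith)
    _ = 2 := Real.rpow_one 2
  have hwz := wt_pos H z
  have hzr : (0:ℝ) ≤ |z| ^ (2*H-2) := Real.rpow_nonneg (abs_nonneg z) _
  calc |u| ^ (2*H-2) ≤ (|z|/2) ^ (2*H-2) := h1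
  _ = |z| ^ (2*H-2) * 2 ^ (2-2*H) := h2
  _ ≤ (2 ^ (1-H) * wt H z) * 4 := by
      apply mul_le_mul h3 h4 (by positivity) (by positivity)
  _ ≤ (2 * wt H z) * 4 := by nlinarith
  _ = 8 * wt H z := by ring

lemma conv_bound {H : ℝ} (hH0 : 0 ≤ H) (hH2 : H ≤ 1/2) (z h : ℝ) :
    |h| ^ (2*H-2) * wt H (z + h)
      ≤ 4 * wt H z * |h| ^ (2*H-2) + 8 * wt H z * wt H (z + h) := by
  have hH1 : H ≤ 1 := by linarith
  have hwz := wt_pos H z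
  have hwzh := wt_pos H (z + h)
  have hr : (0:ℝ) ≤ |h| ^ (2*H-2) := Real.rpow_nonneg (abs_nonneg h) _
  rcases le_or_gt |z| 1 with hz | hz
  · have h1 : wt H (z + h) ≤ 1 := wt_le_one hH1 _
    have h2 : (1:ℝ)/2 ≤ wt H z := wt_ge_half hH0 hH1 hz
    have : |h| ^ (2*H-2) * wt H (z + h) ≤ |h| ^ (2*H-2) * (2 * wt H z) :=
      mul_le_mul_of_nonneg_left (by linarith) hr
    nlinarith
  · rcases le_or_gt (|z|/2) (|z + h|) with hcase | hcase
    · have h1 : wt H (z + h) ≤ 4 * wt H z := quarter_bound hH0 hH1 hcase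
      have : |h| ^ (2*H-2) * wt H (z + h) ≤ |h| ^ (2*H-2) * (4 * wt H z) :=
        mul_le_mul_of_nonneg_left h1 hr
      nlinarith
    · have hh : |z|/2 ≤ |h| := by
        have htri : |z| ≤ |z + h| + |h| := by
          calc |z| = |(z + h) + (-h)| := by ring_nf
          _ ≤ |z + h| + |-h| := abs_add_le _ _
          _ = |z + h| + |h| := by rw [abs_neg]
        linarith
      have h1 : |h| ^ (2*H-2) ≤ 8 * wt H z := abs_rpow_le_wt hH0 hH2 hz.le hh
      have : |h| ^ (2*H-2) * wt H (z + h) ≤ (8 * wt H z) * wt H (z + h) :=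
        mul_le_mul_of_nonneg_right h1 hwzh.le
      nlinarith

set_option maxHeartbeats 1600000 in
theorem stmt_5 (H cH : ℝ) (hH : 1/4 < H ∧ H < 1/2)
    (hnorm : ∫ x : ℝ, cH * (1 + x ^ 2) ^ (H - 1) = 1)
    (T : ℝ) (hT : 0 < T) :
    ∃ C : ℝ, ∀ t ∈ Set.Ioc (0:ℝ) T, ∀ z : ℝ,
      (∫ h : ℝ, ∫ x : ℝ,
          |Dker t x h| ^ 2 * |h| ^ (2 * H - 2) * (cH * (1 + (z - x) ^ 2) ^ (H - 1)))
        ≤ C * t ^ (H - 1) * (cH * (1 + z ^ 2) ^ (H - 1)) := by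
  obtain ⟨hH14, hH12⟩ := hH
  have hH0 : 0 < H := by linarith
  have hH1 : H < 1 := by linarith
  -- normalization facts
  have hnorm' : ∫ x : ℝ, cH * wt H x = 1 := hnorm
  have hInt : Integrable (fun x : ℝ => cH * wt H x) := by
    by_contra hna
    rw [integral_undef hna] at hnorm'
    exact one_ne_zero hnorm'.symm
  have hcH : 0 < cH := by
    rcases le_or_gt cH 0 with hc | hc
    · exfalso
      have hle : ∫ x : ℝ, cH * wt H x ≤ 0 := by
        apply integral_nonpos
        intro x
        have := wt_pos H x
        simp only [Pi.zero_apply]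
        nlinarith
      linarith
    · exact hc
  have hIntw : Integrable (fun x : ℝ => wt H x) := by
    have h1 := hInt.const_mul cH⁻¹
    apply h1.congr
    filter_upwards with x
    field_simp
  set Iw : ℝ := ∫ x : ℝ, wt H x with hIwdef
  have hIw0 : 0 ≤ Iw := integral_nonneg fun x => (wt_pos H x).le
  refine ⟨36*(1+16*T) + 20*(1+4*T)/(1-2*H) + 16*(1+4*T)*Iw*T^((1:ℝ)/2-H), ?_⟩
  rintro t ⟨ht0, htT⟩ z
  show (∫ h : ℝ, ∫ x : ℝ,
      |Dker t x h| ^ 2 * |h| ^ (2 * H - 2) * (cH * wt H (z - x)))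
      ≤ _ * t ^ (H - 1) * (cH * wt H z)
  set s : ℝ := Real.sqrt t with hs
  have hspos : 0 < s := Real.sqrt_pos.mpr ht0
  have hs2 : s ^ 2 = t := Real.sq_sqrt ht0.le
  have hwz := wt_pos H z
  set A1 : ℝ := cH * (18*(1+16*T)) * t^H * s⁻¹ * t⁻¹ * wt H z with hA1
  set A2 : ℝ := cH * (2*(1+4*T)) * t^(-(1:ℝ)/2) * (5 * wt H z) with hA2
  set A3 : ℝ := cH * (2*(1+4*T)) * t^(-(1:ℝ)/2) * (8 * wt H z) with hA3
  have hA1nn : 0 ≤ A1 := by rw [hA1]; positivity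
  have hA2nn : 0 ≤ A2 := by rw [hA2]; positivity
  have hA3nn : 0 ≤ A3 := by rw [hA3]; positivity
  set G : ℝ → ℝ := fun h =>
      A1 * Set.indicator (Icc (-s) s) (fun _ => (1:ℝ)) h
      + A2 * Set.indicator (Ioi s) (fun v => v ^ (2*H-2)) |h|
      + A3 * Set.indicator {u : ℝ | s < |u|} (fun u => wt H (z + u)) h with hG
  -- inner integral rewrite
  have hrw : ∀ h : ℝ, (∫ x : ℝ, |Dker t x h| ^ 2 * |h| ^ (2 * H - 2) * (cH * wt H (z - x)))
      = (|h| ^ (2*H-2) * cH) * ∫ x : ℝ, (Dker t x h) ^ 2 * wt H (z - x) := by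
    intro h
    rw [← integral_const_mul]
    apply integral_congr_ae
    filter_upwards with x
    rw [sq_abs]
    ring
  -- pointwise bound F ≤ G
  have hFG : ∀ h : ℝ, (∫ x : ℝ, |Dker t x h| ^ 2 * |h| ^ (2 * H - 2) * (cH * wt H (z - x))) ≤ G h := by
    intro h
    rw [hrw h]
    have hrnn : (0:ℝ) ≤ |h| ^ (2*H-2) := Real.rpow_nonneg (abs_nonneg h) _
    rcases le_or_gt |h| s with hsm | hbg
    · -- small h
      have hGval : G h = A1 := by
        simp only [hG]
        have h1 : h ∈ Icc (-s) s := Set.mem_Icc.mpr (abs_le.mp hsm)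
        have h2 : |h| ∉ Ioi s := by simp only [Set.mem_Ioi, not_lt]; exact hsm
        have h3 : h ∉ {u : ℝ | s < |u|} := by simp only [Set.mem_setOf_eq, not_lt]; exact hsm
        rw [Set.indicator_of_mem h1, Set.indicator_of_notMem h2, Set.indicator_of_notMem h3]
        ring
      rw [hGval]
      have hin := inner_small hH0.le hH1.le hT ht0 htT z (hs ▸ hsm)
      calc (|h| ^ (2*H-2) * cH) * ∫ x : ℝ, (Dker t x h) ^ 2 * wt H (z - x)
          ≤ (|h| ^ (2*H-2) * cH) * (18 * (1 + 16 * T) * h ^ 2 * s⁻¹ * t⁻¹ * wt H z) := by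
            apply mul_le_mul_of_nonneg_left _ (by positivity)
            exact hin
      _ = (cH * (18*(1+16*T)) * s⁻¹ * t⁻¹ * wt H z) * (|h| ^ (2*H-2) * h ^ 2) := by ring
      _ ≤ (cH * (18*(1+16*T)) * s⁻¹ * t⁻¹ * wt H z) * t ^ H := by
            apply mul_le_mul_of_nonneg_left (rpow_prod_bound hH0 hH1 ht0 (hs ▸ hsm))
            positivity
      _ = A1 := by rw [hA1]; ring
    · -- big h
      have hGval : G h = A2 * |h| ^ (2*H-2) + A3 * wt H (z + h) := by
        simp only [hG]
        have h1 : h ∉ Icc (-s) s := by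
          intro hmem
          have := abs_le.mpr (Set.mem_Icc.mp hmem)
          linarith
        have h2 : |h| ∈ Ioi s := hbg
        have h3 : h ∈ {u : ℝ | s < |u|} := hbg
        rw [Set.indicator_of_notMem h1, Set.indicator_of_mem h2, Set.indicator_of_mem h3]
        ring
      rw [hGval]
      have hin := inner_big hH0.le hH1.le hT ht0 htT z h
      have hwzh := wt_pos H (z + h)
      calc (|h| ^ (2*H-2) * cH) * ∫ x : ℝ, (Dker t x h) ^ 2 * wt H (z - x)
          ≤ (|h| ^ (2*H-2) * cH) * (2 * (1 + 4 * T) * t ^ (-(1:ℝ)/2) * (wt H z + wt H (z + h))) := by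
            apply mul_le_mul_of_nonneg_left hin (by positivity)
      _ = (cH * (2*(1+4*T)) * t^(-(1:ℝ)/2)) * (|h| ^ (2*H-2) * wt H z + |h| ^ (2*H-2) * wt H (z + h)) := by
            ring
      _ ≤ (cH * (2*(1+4*T)) * t^(-(1:ℝ)/2)) * (|h| ^ (2*H-2) * wt H z
            + (4 * wt H z * |h| ^ (2*H-2) + 8 * wt H z * wt H (z + h))) := by
            apply mul_le_mul_of_nonneg_left _ (by positivity)
            have := conv_bound hH0.le (by linarith : H ≤ 1/2) z h
            linarith
      _ = A2 * |h| ^ (2*H-2) + A3 * wt H (z + h) := by rw [hA2, hA3]; ring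
  -- integrability of G pieces
  have hr2 : (2*H-2 : ℝ) < -1 := by linarith
  have htail := tail_int hspos hr2
  have hg1 : Integrable (Set.indicator (Icc (-s) s) (fun _ => (1:ℝ))) := by
    apply (integrable_indicator_iff measurableSet_Icc).mpr
    exact integrableOn_const (by rw [Real.volume_Icc]; exact ENNReal.ofReal_ne_top)
  have hshiftw : Integrable (fun h : ℝ => wt H (z + h)) := by
    have h1 := integrable_shift hIntw z
    apply h1.congr
    filter_upwards with x
    rw [add_comm]
  have hmeas3 : MeasurableSet {u : ℝ | s < |u|} :=
    measurableSet_lt measurable_const continuous_abs.measurable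
  have hg3 : Integrable (Set.indicator {u : ℝ | s < |u|} (fun u => wt H (z + u))) :=
    hshiftw.indicator hmeas3
  have hf1 : Integrable (fun h : ℝ => A1 * Set.indicator (Icc (-s) s) (fun _ => (1:ℝ)) h) :=
    hg1.const_mul A1
  have hf2 : Integrable (fun h : ℝ => A2 * Set.indicator (Ioi s) (fun v => v ^ (2*H-2)) |h|) :=
    htail.1.const_mul A2
  have hf3 : Integrable (fun h : ℝ => A3 * Set.indicator {u : ℝ | s < |u|} (fun u => wt H (z + u)) h) :=
    hg3.const_mul A3
  have hf12 : Integrable (fun h : ℝ => A1 * Set.indicator (Icc (-s) s) (fun _ => (1:ℝ)) h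
      + A2 * Set.indicator (Ioi s) (fun v => v ^ (2*H-2)) |h|) := hf1.add hf2
  have hGint : Integrable G := by
    rw [hG]
    exact hf12.add hf3
  -- monotone step
  have hmono : (∫ h : ℝ, ∫ x : ℝ, |Dker t x h| ^ 2 * |h| ^ (2 * H - 2) * (cH * wt H (z - x)))
      ≤ ∫ h, G h := by
    refine integral_mono_of_nonneg ?_ hGint (Filter.Eventually.of_forall hFG)
    filter_upwards with h
    apply integral_nonneg
    intro x
    have h1 := wt_pos H (z - x)
    have h2 : (0:ℝ) ≤ |h| ^ (2*H-2) := Real.rpow_nonneg (abs_nonneg h) _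
    positivity
  -- computing / bounding ∫ G
  have hIG : ∫ h, G h = A1 * (∫ h : ℝ, Set.indicator (Icc (-s) s) (fun _ => (1:ℝ)) h)
      + A2 * (∫ h : ℝ, Set.indicator (Ioi s) (fun v => v ^ (2*H-2)) |h|)
      + A3 * (∫ h : ℝ, Set.indicator {u : ℝ | s < |u|} (fun u => wt H (z + u)) h) := by
    rw [hG]
    rw [integral_add hf12 hf3, integral_add hf1 hf2,
      integral_const_mul, integral_const_mul, integral_const_mul]
  have hJ1 : (∫ h : ℝ, Set.indicator (Icc (-s) s) (fun _ => (1:ℝ)) h) = 2 * s := by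
    rw [integral_indicator_const _ measurableSet_Icc, Real.volume_real_Icc_of_le (by linarith), smul_eq_mul, mul_one]
    ring
  have hJ2 : (∫ h : ℝ, Set.indicator (Ioi s) (fun v => v ^ (2*H-2)) |h|)
      = 2 * (-s ^ (2*H-2+1) / (2*H-2+1)) := htail.2
  have hJ3 : (∫ h : ℝ, Set.indicator {u : ℝ | s < |u|} (fun u => wt H (z + u)) h) ≤ Iw := by
    have hle : ∀ h : ℝ, Set.indicator {u : ℝ | s < |u|} (fun u => wt H (z + u)) h ≤ wt H (z + h) := by
      intro h
      apply Set.indicator_le_self' (fun x _ => (wt_pos H (z + x)).le)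
    have heq : (∫ h : ℝ, wt H (z + h)) = Iw := by
      rw [hIwdef]
      calc (∫ h : ℝ, wt H (z + h)) = ∫ h : ℝ, wt H (h + z) := by
            apply integral_congr_ae
            filter_upwards with h
            rw [add_comm]
      _ = ∫ x : ℝ, wt H x := integral_add_right_eq_self (wt H) z
    calc (∫ h : ℝ, Set.indicator {u : ℝ | s < |u|} (fun u => wt H (z + u)) h)
        ≤ ∫ h : ℝ, wt H (z + h) := integral_mono hg3 hshiftw hle
    _ = Iw := heq
  -- rpow arithmetic
  have hpow1 : t ^ H * t⁻¹ = t ^ (H - 1) := by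
    rw [← Real.rpow_neg_one t, ← Real.rpow_add ht0, show H + -1 = H - 1 from by ring]
  have hpow2 : s ^ (2*H-2+1) = t ^ (H - 1/2) := by
    rw [hs, Real.sqrt_eq_rpow, ← Real.rpow_mul ht0.le]
    congr 1
    ring
  have hpow3 : t ^ (-(1:ℝ)/2) * t ^ (H - 1/2) = t ^ (H-1) := by
    rw [← Real.rpow_add ht0]
    congr 1
    ring
  have hpow4 : t ^ (-(1:ℝ)/2) ≤ T ^ ((1:ℝ)/2 - H) * t ^ (H - 1) := by
    have e1 : t ^ (-(1:ℝ)/2) = t ^ ((1:ℝ)/2 - H) * t ^ (H - 1) := by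
      rw [← Real.rpow_add ht0]
      congr 1
      ring
    rw [e1]
    apply mul_le_mul_of_nonneg_right _ (Real.rpow_pos_of_pos ht0 _).le
    exact Real.rpow_le_rpow ht0.le htT (by linarith)
  -- final assembly
  have hterm1 : A1 * (2 * s) = 36*(1+16*T) * t ^ (H-1) * (cH * wt H z) := by
    rw [hA1, ← hpow1]
    field_simp
    ring
  have hterm2 : A2 * (2 * (-s ^ (2*H-2+1) / (2*H-2+1)))
      = 20*(1+4*T)/(1-2*H) * t ^ (H-1) * (cH * wt H z) := by
    rw [hA2, hpow2]
    rw [show -t ^ (H - 1/2) / (2*H-2+1) = t ^ (H - 1/2) / (1-2*H) from by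
      rw [div_eq_div_iff (by linarith) (by linarith)]; ring]
    rw [show cH * (2*(1+4*T)) * t^(-(1:ℝ)/2) * (5 * wt H z) * (2 * (t ^ (H - 1/2) / (1-2*H)))
        = (20*(1+4*T)/(1-2*H)) * (t^(-(1:ℝ)/2) * t ^ (H - 1/2)) * (cH * wt H z) from by ring,
      hpow3]
  have hterm3 : A3 * Iw ≤ 16*(1+4*T)*Iw*T^((1:ℝ)/2-H) * t ^ (H-1) * (cH * wt H z) := by
    rw [hA3]
    calc cH * (2*(1+4*T)) * t^(-(1:ℝ)/2) * (8 * wt H z) * Iw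
        = (16*(1+4*T)*Iw) * (cH * wt H z) * t^(-(1:ℝ)/2) := by ring
    _ ≤ (16*(1+4*T)*Iw) * (cH * wt H z) * (T ^ ((1:ℝ)/2 - H) * t ^ (H - 1)) := by
        apply mul_le_mul_of_nonneg_left hpow4
        positivity
    _ = 16*(1+4*T)*Iw*T^((1:ℝ)/2-H) * t ^ (H-1) * (cH * wt H z) := by ring
  calc (∫ h : ℝ, ∫ x : ℝ, |Dker t x h| ^ 2 * |h| ^ (2 * H - 2) * (cH * wt H (z - x)))
      ≤ ∫ h, G h := hmono
  _ = A1 * (2 * s) + A2 * (2 * (-s ^ (2*H-2+1) / (2*H-2+1)))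
      + A3 * (∫ h : ℝ, Set.indicator {u : ℝ | s < |u|} (fun u => wt H (z + u)) h) := by
      rw [hIG, hJ1, hJ2]
  _ ≤ A1 * (2 * s) + A2 * (2 * (-s ^ (2*H-2+1) / (2*H-2+1))) + A3 * Iw := by
      have := mul_le_mul_of_nonneg_left hJ3 hA3nn
      linarith
  _ ≤ (36*(1+16*T) + 20*(1+4*T)/(1-2*H) + 16*(1+4*T)*Iw*T^((1:ℝ)/2-H)) * t ^ (H - 1)
      * (cH * wt H z) := by
      have hexpand : (36*(1+16*T) + 20*(1+4*T)/(1-2*H) + 16*(1+4*T)*Iw*T^((1:ℝ)/2-H)) * t ^ (H - 1)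
          * (cH * wt H z)
          = 36*(1+16*T) * t ^ (H-1) * (cH * wt H z)
            + 20*(1+4*T)/(1-2*H) * t ^ (H-1) * (cH * wt H z)
            + 16*(1+4*T)*Iw*T^((1:ℝ)/2-H) * t ^ (H-1) * (cH * wt H z) := by ring
      linarith [hterm1, hterm2, hterm3, hexpand.le, hexpand.ge]
end

section
/- For any fixed γ ∈ (0,1), there exists a constant C (depending only on γ) such that for all t > 0, h > 0 and x ∈ ℝ, |p_{t+h}(x) - p_t(x)| ≤ C h^{γ} t^{-γ} [ p_{(2/γ)(t+h)}(x) + p_{(2/γ)t}(x) ], where p_s(x) = (4πs)^{-1/2} exp(-x²/(4s)). -/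
open MeasureTheory Real

lemma heatK_pos {t : ℝ} (ht : 0 < t) (x : ℝ) : 0 < heatK t x := by
  have h : 0 < 4 * Real.pi * t := by positivity
  unfold heatK
  positivity

lemma heatK_le_scale {a t : ℝ} (ha : 1 ≤ a) (ht : 0 < t) (x : ℝ) :
    heatK t x ≤ a ^ ((1:ℝ)/2) * heatK (a * t) x := by
  have ha0 : 0 < a := lt_of_lt_of_le one_pos ha
  have h4 : 0 < 4 * Real.pi * t := by positivity
  unfold heatK
  have hmul : (4 * Real.pi * (a * t)) ^ (-(1:ℝ)/2)
      = a ^ (-(1:ℝ)/2) * (4 * Real.pi * t) ^ (-(1:ℝ)/2) := by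
    rw [show 4 * Real.pi * (a * t) = a * (4 * Real.pi * t) by ring,
      Real.mul_rpow ha0.le h4.le]
  rw [hmul]
  have hcancel : a ^ ((1:ℝ)/2) * a ^ (-(1:ℝ)/2) = 1 := by
    rw [← Real.rpow_add ha0]; norm_num
  have hexp : Real.exp (-(x ^ 2) / (4 * t)) ≤ Real.exp (-(x ^ 2) / (4 * (a * t))) := by
    apply Real.exp_le_exp.2
    rw [neg_div, neg_div, neg_le_neg_iff]
    gcongr
    nlinarith
  calc (4 * Real.pi * t) ^ (-(1:ℝ)/2) * Real.exp (-(x ^ 2) / (4 * t))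
      ≤ (4 * Real.pi * t) ^ (-(1:ℝ)/2) * Real.exp (-(x ^ 2) / (4 * (a * t))) :=
        mul_le_mul_of_nonneg_left hexp (Real.rpow_nonneg h4.le _)
    _ = a ^ ((1:ℝ)/2) * (a ^ (-(1:ℝ)/2) * (4 * Real.pi * t) ^ (-(1:ℝ)/2) *
          Real.exp (-(x ^ 2) / (4 * (a * t)))) := by
        rw [show a ^ ((1:ℝ)/2) * (a ^ (-(1:ℝ)/2) * (4 * Real.pi * t) ^ (-(1:ℝ)/2) *
              Real.exp (-(x ^ 2) / (4 * (a * t))))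
            = (a ^ ((1:ℝ)/2) * a ^ (-(1:ℝ)/2)) * ((4 * Real.pi * t) ^ (-(1:ℝ)/2) *
              Real.exp (-(x ^ 2) / (4 * (a * t)))) by ring, hcancel, one_mul]

lemma lin_exp {c w : ℝ} (hc : 0 < c) (hw : 0 ≤ w) :
    w * Real.exp (-(c * w)) ≤ 1 / (Real.exp 1 * c) := by
  have h := Real.add_one_le_exp (c * w - 1)
  have h3 : Real.exp 1 * (c * w) ≤ Real.exp (c * w) := by
    calc Real.exp 1 * (c * w) ≤ Real.exp 1 * Real.exp (c * w - 1) :=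
          mul_le_mul_of_nonneg_left (by linarith) (Real.exp_pos 1).le
      _ = Real.exp (c * w) := by rw [← Real.exp_add]; ring_nf
  have hexp : 0 < Real.exp (c * w) := Real.exp_pos _
  rw [Real.exp_neg, ← div_eq_mul_inv, div_le_div_iff₀ hexp (by positivity)]
  nlinarith [Real.exp_pos 1]

lemma deriv_bound {γ : ℝ} (hγ0 : 0 < γ) (hγ1 : γ < 1) {t s : ℝ} (x : ℝ)
    (ht : 0 < t) (hs1 : t ≤ s) (hs2 : s ≤ 2 * t) :
    |heatK s x * (x ^ 2 / (4 * s ^ 2) - 1 / (2 * s))| ≤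
      (2/γ) ^ ((1:ℝ)/2) * (2 / (Real.exp 1 * (1-γ)) + 1/2) * t⁻¹ *
        heatK ((2/γ) * t) x := by
  have hs : 0 < s := lt_of_lt_of_le ht hs1
  have ha0 : (0:ℝ) < 2/γ := by positivity
  have h4t : 0 < 4 * Real.pi * t := by positivity
  have h4s : 0 < 4 * Real.pi * s := by positivity
  set u := x ^ 2 / (8 * t) with hu
  set v := x ^ 2 / (4 * s) with hv
  have hu0 : 0 ≤ u := by positivity
  have hv0 : 0 ≤ v := by positivity
  have huv : u ≤ v := by
    rw [hu, hv, div_le_div_iff₀ (by positivity) (by positivity)]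
    nlinarith
  have hv2u : v ≤ 2 * u := by
    have h1 : x ^ 2 / (4 * s) ≤ x ^ 2 / (4 * t) := by
      rw [div_le_div_iff₀ (by positivity) (by positivity)]
      nlinarith
    have h2 : 2 * u = x ^ 2 / (4 * t) := by rw [hu]; ring
    linarith
  set A := (4 * Real.pi * s) ^ (-(1:ℝ)/2) with hA
  set B := (4 * Real.pi * t) ^ (-(1:ℝ)/2) with hB
  set E := Real.exp (-(γ * u)) with hE
  have hB0 : 0 ≤ B := Real.rpow_nonneg h4t.le _
  have hE0 : 0 < E := Real.exp_pos _
  have hAB : A ≤ B := by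
    rw [hA, hB, show (-(1:ℝ)/2) = -((1:ℝ)/2) by norm_num, Real.rpow_neg h4s.le,
      Real.rpow_neg h4t.le]
    exact inv_anti₀ (Real.rpow_pos_of_pos h4t _)
      (Real.rpow_le_rpow h4t.le (by nlinarith [Real.pi_pos]) (by norm_num))
  have hA0 : 0 ≤ A := Real.rpow_nonneg h4s.le _
  have heE : Real.exp (-v) ≤ E := by
    apply Real.exp_le_exp.2
    nlinarith
  have hveE : v * Real.exp (-v) ≤ 2 / (Real.exp 1 * (1-γ)) * E := by
    have h1 : Real.exp (-v) ≤ Real.exp (-u) := Real.exp_le_exp.2 (by linarith)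
    have step1 : v * Real.exp (-v) ≤ (2 * u) * Real.exp (-u) :=
      mul_le_mul hv2u h1 (Real.exp_pos _).le (by positivity)
    have hsplit : Real.exp (-u) = Real.exp (-((1-γ) * u)) * E := by
      rw [hE, ← Real.exp_add]; congr 1; ring
    have h2 := lin_exp (c := 1-γ) (by linarith) hu0
    calc v * Real.exp (-v) ≤ (2 * u) * Real.exp (-u) := step1
      _ = 2 * (u * Real.exp (-((1-γ) * u))) * E := by rw [hsplit]; ring
      _ ≤ 2 * (1 / (Real.exp 1 * (1-γ))) * E := by nlinarith
      _ = 2 / (Real.exp 1 * (1-γ)) * E := by ring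
  have harg : -(x ^ 2) / (4 * ((2/γ) * t)) = -(γ * (x ^ 2 / (8 * t))) := by
    field_simp
    ring
  have hheat : heatK ((2/γ) * t) x = (2/γ) ^ (-(1:ℝ)/2) * B * E := by
    unfold heatK
    rw [show 4 * Real.pi * ((2/γ) * t) = (2/γ) * (4 * Real.pi * t) by ring,
      Real.mul_rpow ha0.le h4t.le, harg, ← hu, ← hB, ← hE]
  have hcancel : (2/γ) ^ ((1:ℝ)/2) * (2/γ) ^ (-(1:ℝ)/2) = 1 := by
    rw [← Real.rpow_add ha0]; norm_num
  have hexparg : Real.exp (-(x ^ 2) / (4 * s)) = Real.exp (-v) := by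
    rw [hv, neg_div]
  have hstep : |heatK s x * (x ^ 2 / (4 * s ^ 2) - 1 / (2 * s))| ≤
      heatK s x * (x ^ 2 / (4 * s ^ 2) + 1 / (2 * s)) := by
    rw [abs_mul, abs_of_pos (heatK_pos hs x)]
    apply mul_le_mul_of_nonneg_left _ (heatK_pos hs x).le
    calc |x ^ 2 / (4 * s ^ 2) - 1 / (2 * s)| ≤ |x ^ 2 / (4 * s ^ 2)| + |1 / (2 * s)| :=
          abs_sub _ _
      _ = x ^ 2 / (4 * s ^ 2) + 1 / (2 * s) := by
          rw [abs_of_nonneg (by positivity), abs_of_nonneg (by positivity)]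
  have hrw : heatK s x * (x ^ 2 / (4 * s ^ 2) + 1 / (2 * s)) =
      (A * (v * Real.exp (-v)) + A * (Real.exp (-v) / 2)) / s := by
    unfold heatK
    rw [hexparg, ← hA, hv]
    field_simp
    try ring
  have hKpos : 0 ≤ 2 / (Real.exp 1 * (1-γ)) :=
    div_nonneg (by norm_num) (mul_nonneg (Real.exp_pos 1).le (by linarith))
  have hnum : A * (v * Real.exp (-v)) + A * (Real.exp (-v) / 2) ≤
      B * (2 / (Real.exp 1 * (1-γ)) * E) + B * (E / 2) := by
    refine add_le_add (mul_le_mul hAB hveE (by positivity) hB0)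
      (mul_le_mul hAB (by linarith [heE]) (by positivity) hB0)
  calc |heatK s x * (x ^ 2 / (4 * s ^ 2) - 1 / (2 * s))|
      ≤ (A * (v * Real.exp (-v)) + A * (Real.exp (-v) / 2)) / s := by
        rw [← hrw]; exact hstep
    _ ≤ (B * (2 / (Real.exp 1 * (1-γ)) * E) + B * (E / 2)) / t := by
        exact div_le_div₀ (add_nonneg (mul_nonneg hB0 (mul_nonneg hKpos hE0.le))
          (mul_nonneg hB0 (by positivity))) hnum ht hs1
    _ = (2/γ) ^ ((1:ℝ)/2) * (2 / (Real.exp 1 * (1-γ)) + 1/2) * t⁻¹ *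
        heatK ((2/γ) * t) x := by
        rw [hheat, show (2/γ) ^ ((1:ℝ)/2) * (2 / (Real.exp 1 * (1-γ)) + 1/2) * t⁻¹ *
            ((2/γ) ^ (-(1:ℝ)/2) * B * E)
          = ((2/γ) ^ ((1:ℝ)/2) * (2/γ) ^ (-(1:ℝ)/2)) *
            ((2 / (Real.exp 1 * (1-γ)) + 1/2) * t⁻¹ * (B * E)) by ring, hcancel,
          one_mul]
        field_simp

lemma heatK_hasDerivAt (x : ℝ) {s : ℝ} (hs : 0 < s) :
    HasDerivAt (fun s => heatK s x)
      (heatK s x * (x ^ 2 / (4 * s ^ 2) - 1 / (2 * s))) s := by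
  have h4 : 0 < 4 * Real.pi * s := by positivity
  have h1 : HasDerivAt (fun s : ℝ => 4 * Real.pi * s) (4 * Real.pi) s := by
    simpa using (hasDerivAt_id s).const_mul (4 * Real.pi)
  have hg : HasDerivAt (fun s : ℝ => (4 * Real.pi * s) ^ (-(1:ℝ)/2))
      ((-(1:ℝ)/2) * (4 * Real.pi * s) ^ (-(1:ℝ)/2 - 1) * (4 * Real.pi)) s := by
    have := (Real.hasDerivAt_rpow_const (p := -(1:ℝ)/2) (Or.inl h4.ne')).comp s h1
    simpa [Function.comp_def, mul_comm, mul_assoc, mul_left_comm] using this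
  have h2 : HasDerivAt (fun s : ℝ => s⁻¹) (-(s ^ 2)⁻¹) s := hasDerivAt_inv hs.ne'
  have h3 : HasDerivAt (fun s : ℝ => -(x ^ 2) / 4 * s⁻¹) (-(x ^ 2) / 4 * -(s ^ 2)⁻¹) s :=
    h2.const_mul _
  have heq : (fun s : ℝ => -(x ^ 2) / (4 * s)) = fun s : ℝ => -(x ^ 2) / 4 * s⁻¹ := by
    funext y; ring
  have hinner : HasDerivAt (fun s : ℝ => -(x ^ 2) / (4 * s)) (x ^ 2 / (4 * s ^ 2)) s := by
    rw [heq]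
    convert h3 using 1
    field_simp
  have he : HasDerivAt (fun s : ℝ => Real.exp (-(x ^ 2) / (4 * s)))
      (Real.exp (-(x ^ 2) / (4 * s)) * (x ^ 2 / (4 * s ^ 2))) s := hinner.exp
  have hprod := hg.mul he
  have hsplit : (4 * Real.pi * s) ^ (-(1:ℝ)/2 - 1)
      = (4 * Real.pi * s) ^ (-(1:ℝ)/2) * (4 * Real.pi * s)⁻¹ := by
    rw [show (-(1:ℝ)/2 - 1) = (-(1:ℝ)/2) + (-1) by ring, Real.rpow_add h4,
      Real.rpow_neg_one]
  have : HasDerivAt (fun s => heatK s x)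
      ((-(1:ℝ)/2) * (4 * Real.pi * s) ^ (-(1:ℝ)/2 - 1) * (4 * Real.pi) *
          Real.exp (-(x ^ 2) / (4 * s)) +
        (4 * Real.pi * s) ^ (-(1:ℝ)/2) *
          (Real.exp (-(x ^ 2) / (4 * s)) * (x ^ 2 / (4 * s ^ 2)))) s := by
    unfold heatK; exact hprod
  convert this using 1
  unfold heatK
  rw [hsplit]
  have hπ : Real.pi ≠ 0 := Real.pi_ne_zero
  field_simp
  ring

theorem stmt_8 (γ : ℝ) (hγ : 0 < γ ∧ γ < 1) :
    ∃ C : ℝ, ∀ t h : ℝ, 0 < t → 0 < h → ∀ x : ℝ,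
      |heatK (t + h) x - heatK t x| ≤
        C * h ^ γ * t ^ (-γ) * (heatK ((2 / γ) * (t + h)) x + heatK ((2 / γ) * t) x) := by
  obtain ⟨hγ0, hγ1⟩ := hγ
  refine ⟨(2/γ) ^ ((1:ℝ)/2) * (2 / (Real.exp 1 * (1-γ)) + 1/2 + 1), ?_⟩
  intro t h ht hh x
  have ha0 : (0:ℝ) < 2/γ := by positivity
  have ha1 : (1:ℝ) ≤ 2/γ := by rw [le_div_iff₀ hγ0]; linarith
  have hth : 0 < t + h := by linarith
  set P1 := heatK ((2/γ) * (t + h)) x with hP1def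
  set P2 := heatK ((2/γ) * t) x with hP2def
  have hP1 : 0 < P1 := heatK_pos (by positivity) x
  have hP2 : 0 < P2 := heatK_pos (by positivity) x
  have hKpos : 0 ≤ 2 / (Real.exp 1 * (1-γ)) :=
    div_nonneg (by norm_num) (mul_nonneg (Real.exp_pos 1).le (by linarith))
  set C := (2/γ) ^ ((1:ℝ)/2) * (2 / (Real.exp 1 * (1-γ)) + 1/2 + 1) with hCdef
  set K2 := (2/γ) ^ ((1:ℝ)/2) * (2 / (Real.exp 1 * (1-γ)) + 1/2) with hK2def
  have hrp : (0:ℝ) ≤ (2/γ) ^ ((1:ℝ)/2) := Real.rpow_nonneg ha0.le _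
  have hC0 : 0 ≤ C := by rw [hCdef]; exact mul_nonneg hrp (by linarith)
  have hK20 : 0 ≤ K2 := by rw [hK2def]; exact mul_nonneg hrp (by linarith)
  have hCK : K2 ≤ C := by rw [hCdef, hK2def]; nlinarith
  have hr0 : 0 < h ^ γ * t ^ (-γ) :=
    mul_pos (Real.rpow_pos_of_pos hh _) (Real.rpow_pos_of_pos ht _)
  rcases le_or_gt h t with hht | hth2
  · -- case h ≤ t : mean value theorem
    obtain ⟨c, hc, hceq⟩ := exists_hasDerivAt_eq_slope (fun s => heatK s x)
      (fun s => heatK s x * (x ^ 2 / (4 * s ^ 2) - 1 / (2 * s)))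
      (by linarith : t < t + h)
      (fun y hy => ((heatK_hasDerivAt x (lt_of_lt_of_le ht hy.1)).continuousAt).continuousWithinAt)
      (fun y hy => heatK_hasDerivAt x (lt_trans ht hy.1))
    have hc1 : t ≤ c := hc.1.le
    have hc2 : c ≤ 2 * t := by have := hc.2.le; linarith
    have hdb := deriv_bound hγ0 hγ1 x ht hc1 hc2
    rw [← hP2def, ← hK2def] at hdb
    have hdiff : heatK (t + h) x - heatK t x =
        h * (heatK c x * (x ^ 2 / (4 * c ^ 2) - 1 / (2 * c))) := by
      rw [hceq, show t + h - t = h by ring]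
      field_simp
    have hratio : h * t⁻¹ ≤ h ^ γ * t ^ (-γ) := by
      have h1 : h / t ≤ 1 := (div_le_one ht).2 hht
      have h2 : (h/t) ^ (1:ℝ) ≤ (h/t) ^ γ :=
        Real.rpow_le_rpow_of_exponent_ge (by positivity) h1 hγ1.le
      rw [Real.rpow_one] at h2
      have h3 : (h/t) ^ γ = h ^ γ * t ^ (-γ) := by
        rw [Real.div_rpow hh.le ht.le, Real.rpow_neg ht.le, div_eq_mul_inv]
      rw [← h3]
      rw [div_eq_mul_inv] at h2
      exact h2
    calc |heatK (t + h) x - heatK t x|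
        = h * |heatK c x * (x ^ 2 / (4 * c ^ 2) - 1 / (2 * c))| := by
          rw [hdiff, abs_mul, abs_of_pos hh]
      _ ≤ h * (K2 * t⁻¹ * P2) := mul_le_mul_of_nonneg_left hdb hh.le
      _ = K2 * (h * t⁻¹) * P2 := by ring
      _ ≤ K2 * (h ^ γ * t ^ (-γ)) * P2 :=
          mul_le_mul_of_nonneg_right
            (mul_le_mul_of_nonneg_left hratio hK20) hP2.le
      _ ≤ C * h ^ γ * t ^ (-γ) * (P1 + P2) := by
          nlinarith [mul_nonneg (mul_nonneg hC0 hr0.le) hP1.le,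
            mul_nonneg (mul_nonneg (sub_nonneg.2 hCK) hr0.le) hP2.le]
  · -- case t < h
    have hb1 : heatK (t + h) x ≤ (2/γ) ^ ((1:ℝ)/2) * P1 := by
      rw [hP1def]; exact heatK_le_scale ha1 hth x
    have hb2 : heatK t x ≤ (2/γ) ^ ((1:ℝ)/2) * P2 := by
      rw [hP2def]; exact heatK_le_scale ha1 ht x
    have habs : |heatK (t + h) x - heatK t x| ≤ heatK (t + h) x + heatK t x := by
      have h1 := abs_sub (heatK (t + h) x) (heatK t x)
      rw [abs_of_pos (heatK_pos hth x), abs_of_pos (heatK_pos ht x)] at h1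
      exact h1
    have hone : 1 ≤ h ^ γ * t ^ (-γ) := by
      have h2 : t ^ γ ≤ h ^ γ := Real.rpow_le_rpow ht.le hth2.le hγ0.le
      have h3 : t ^ γ * t ^ (-γ) = 1 := by
        rw [← Real.rpow_add ht]; simp
      have h4 : 0 < t ^ (-γ) := Real.rpow_pos_of_pos ht _
      nlinarith
    have hK3 : (2/γ) ^ ((1:ℝ)/2) ≤ C := by rw [hCdef]; nlinarith
    calc |heatK (t + h) x - heatK t x|
        ≤ heatK (t + h) x + heatK t x := habs
      _ ≤ (2/γ) ^ ((1:ℝ)/2) * (P1 + P2) := by rw [mul_add]; exact add_le_add hb1 hb2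
      _ ≤ C * (P1 + P2) := mul_le_mul_of_nonneg_right hK3 (by positivity)
      _ ≤ (h ^ γ * t ^ (-γ)) * (C * (P1 + P2)) :=
          le_mul_of_one_le_left (mul_nonneg hC0 (by positivity)) hone
      _ = C * h ^ γ * t ^ (-γ) * (P1 + P2) := by ring
end

section
/- Let a, b ∈ ℝ with a ≥ 0 and let α, β ∈ (0,1). Suppose u : [0,T] → [0,∞) is bounded and measurable and satisfies u(t) ≤ a + b ∫_0^t ( (t-s)^{α-1} + (t-s)^{β-1} ) u(s) ds for all t ∈ [0,T]. If a = 0 then u(t) = 0 for all t ∈ [0,T]. -/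
/-!
For `a = 0` the hypothesis reads `u t ≤ ∫₀ᵗ k(t,s) u(s) ds` with a nonnegative kernel whose mass
`b ((t-c)^α/α + (t-c)^β/β)` on a window `[c, t]` is at most `1/2` once `t - c ≤ δ`. So if `u`
vanishes on `[0, c]` and is bounded by `B` on `[c, c + δ]`, it is bounded by `B/2` there, hence by
`M/2ⁿ` for every `n`, hence it vanishes on `[0, c + δ]`; finitely many windows of length `δ`
cover `[0, T]`.
-/

open MeasureTheory Real intervalIntegral

theorem IntervalIntegrable.mul_bdd {f g : ℝ → ℝ} {a b M : ℝ}
    (hf : IntervalIntegrable f volume a b)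
    (hg : AEStronglyMeasurable g) (hg_bdd : ∀ s ∈ Set.uIcc a b, ‖g s‖ ≤ M) :
    IntervalIntegrable (fun s => f s * g s) volume a b := by
  rw [intervalIntegrable_iff] at hf ⊢
  exact hf.mul_bdd hg.restrict <| (ae_restrict_iff' measurableSet_uIoc).2 <|
    .of_forall fun s hs => hg_bdd s (Set.uIoc_subset_uIcc hs)

theorem intervalIntegrable_sub_rpow_sub_one {γ : ℝ} (hγ : 0 < γ) (t c d : ℝ) :
    IntervalIntegrable (fun s => (t - s) ^ (γ - 1)) volume c d := by
  simpa using (intervalIntegrable_rpow' (a := t - c) (b := t - d) (r := γ - 1)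
    (by linarith)).comp_sub_left t

theorem integral_sub_rpow_sub_one {γ : ℝ} (hγ : 0 < γ) (c t : ℝ) :
    ∫ s in c..t, (t - s) ^ (γ - 1) = (t - c) ^ γ / γ := by
  rw [integral_comp_sub_left (fun x => x ^ (γ - 1)) t, sub_self,
    integral_rpow (Or.inl (by linarith)), sub_add_cancel, zero_rpow hγ.ne', sub_zero]

theorem le_zero_of_forall_le_imp_le_mul {ι : Type*} {f : ι → ℝ} {S : Set ι} {M q : ℝ}
    (hq : q < 1) (hM : ∀ x ∈ S, f x ≤ M)
    (h : ∀ B, 0 ≤ B → (∀ x ∈ S, f x ≤ B) → ∀ x ∈ S, f x ≤ q * B) :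
    ∀ x ∈ S, f x ≤ 0 := by
  have hpow : ∀ n : ℕ, ∀ x ∈ S, f x ≤ max q 0 ^ n * max M 0 := by
    intro n
    induction n with
    | zero => simpa using fun x hx => (hM x hx).trans (le_max_left M 0)
    | succ n ih =>
      intro x hx
      calc f x ≤ q * (max q 0 ^ n * max M 0) := h _ (by positivity) ih x hx
        _ ≤ max q 0 ^ (n + 1) * max M 0 := by
          rw [pow_succ, mul_comm _ (max q 0), mul_assoc]
          gcongr
          exact le_max_left q 0
  intro x hx
  have hlim : Filter.Tendsto (fun n : ℕ => max q 0 ^ n * max M 0) Filter.atTop (nhds 0) := by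
    simpa using (tendsto_pow_atTop_nhds_zero_of_lt_one (le_max_right q 0)
      (max_lt hq one_pos)).mul_const (max M 0)
  exact ge_of_tendsto hlim (.of_forall fun n => hpow n x hx)

theorem integral_mul_le_of_eq_zero_of_le {f g : ℝ → ℝ} {a c t B : ℝ} (hac : a ≤ c) (hct : c ≤ t)
    (hf_nonneg : ∀ s ∈ Set.Icc c t, 0 ≤ f s) (hf : IntervalIntegrable f volume a t)
    (hg : AEStronglyMeasurable g) (hg_zero : ∀ s ∈ Set.Icc a c, g s = 0)
    (hg_nonneg : ∀ s ∈ Set.Icc c t, 0 ≤ g s) (hg_le : ∀ s ∈ Set.Icc c t, g s ≤ B) :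
    ∫ s in a..t, f s * g s ≤ B * ∫ s in c..t, f s := by
  have hfg : IntervalIntegrable (fun s => f s * g s) volume a t := by
    refine hf.mul_bdd (M := |B|) hg fun s hs => ?_
    rw [Set.uIcc_of_le (hac.trans hct)] at hs
    rcases le_total s c with hsc | hcs
    · simp [hg_zero s ⟨hs.1, hsc⟩]
    · exact (abs_of_nonneg (hg_nonneg s ⟨hcs, hs.2⟩)).trans_le
        ((hg_le s ⟨hcs, hs.2⟩).trans (le_abs_self B))
  have hc : c ∈ Set.uIcc a t := Set.Icc_subset_uIcc ⟨hac, hct⟩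
  have hfg_ct := hfg.mono_set (Set.uIcc_subset_uIcc_right hc)
  rw [← integral_add_adjacent_intervals (hfg.mono_set (Set.uIcc_subset_uIcc_left hc)) hfg_ct,
    integral_congr (g := fun _ => 0) fun s hs => by
      simp [hg_zero s (by rwa [Set.uIcc_of_le hac] at hs)],
    intervalIntegral.integral_zero, zero_add, mul_comm B, ← intervalIntegral.integral_mul_const]
  exact integral_mono_on hct hfg_ct ((hf.mono_set (Set.uIcc_subset_uIcc_right hc)).mul_const B)
    fun s hs => mul_le_mul_of_nonneg_left (hg_le s hs) (hf_nonneg s hs)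

theorem le_mul_of_le_integral_mul {f u : ℝ → ℝ} {c t q B : ℝ} (hc : 0 ≤ c)
    (hct : c ≤ t) (hB : 0 ≤ B) (hf_nonneg : ∀ s ∈ Set.Icc c t, 0 ≤ f s)
    (hf : IntervalIntegrable f volume 0 t) (hf_small : ∫ s in c..t, f s ≤ q)
    (hu_meas : AEStronglyMeasurable u) (hu_zero : ∀ s ∈ Set.Icc 0 c, u s = 0)
    (hu_nonneg : ∀ s ∈ Set.Icc c t, 0 ≤ u s) (hu_le : ∀ s ∈ Set.Icc c t, u s ≤ B)
    (hle : u t ≤ ∫ s in 0..t, f s * u s) :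
    u t ≤ q * B :=
  calc u t ≤ ∫ s in 0..t, f s * u s := hle
    _ ≤ B * ∫ s in c..t, f s :=
      integral_mul_le_of_eq_zero_of_le hc hct hf_nonneg hf hu_meas hu_zero hu_nonneg hu_le
    _ ≤ B * q := mul_le_mul_of_nonneg_left hf_small hB
    _ = q * B := mul_comm B q

theorem eq_zero_of_le_integral_kernel_mul {T δ q : ℝ} {k : ℝ → ℝ → ℝ} {u : ℝ → ℝ}
    (hδ : 0 < δ) (hq : q < 1) (hk_nonneg : ∀ t s, s ≤ t → 0 ≤ k t s)
    (hk_int : ∀ t ∈ Set.Icc 0 T, IntervalIntegrable (k t) volume 0 t)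
    (hk_small : ∀ c t, 0 ≤ c → c ≤ t → t ≤ T → t - c ≤ δ → ∫ s in c..t, k t s ≤ q)
    (hu_meas : AEStronglyMeasurable u) (hu_nonneg : ∀ t ∈ Set.Icc 0 T, 0 ≤ u t)
    (hu_bdd : ∃ M, ∀ t ∈ Set.Icc 0 T, u t ≤ M)
    (hle : ∀ t ∈ Set.Icc 0 T, u t ≤ ∫ s in 0..t, k t s * u s) :
    ∀ t ∈ Set.Icc 0 T, u t = 0 := by
  obtain ⟨M, hM⟩ := hu_bdd
  have hzero : ∀ n : ℕ, ∀ t ∈ Set.Icc 0 T, t ≤ n * δ → u t = 0 := by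
    intro n
    induction n with
    | zero =>
      intro t ht htn
      obtain rfl : t = 0 := le_antisymm (by simpa using htn) ht.1
      exact le_antisymm (by simpa using hle 0 ht) (hu_nonneg 0 ht)
    | succ n ih =>
      have hle_zero := le_zero_of_forall_le_imp_le_mul
        (S := {t ∈ Set.Icc 0 T | t ≤ (n + 1) * δ}) hq (fun t ht => hM t ht.1) <| by
          rintro B hB hbd t ⟨ht, htn⟩
          have hc : 0 ≤ min (n * δ) t := le_min (by positivity) ht.1
          have hct : min (n * δ) t ≤ t := min_le_right _ _
          have hwindow : t - min (n * δ) t ≤ δ := by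
            have := le_min (show t - δ ≤ n * δ by linarith) (show t - δ ≤ t by linarith)
            linarith
          refine le_mul_of_le_integral_mul hc hct hB (fun s hs => hk_nonneg t s hs.2)
            (hk_int t ht) (hk_small _ t hc hct ht.2 hwindow) hu_meas
            (fun s hs => ih s ⟨hs.1, hs.2.trans (hct.trans ht.2)⟩ (hs.2.trans (min_le_left _ _)))
            (fun s hs => hu_nonneg s ⟨hc.trans hs.1, hs.2.trans ht.2⟩)
            (fun s hs => hbd s ⟨⟨hc.trans hs.1, hs.2.trans ht.2⟩, hs.2.trans htn⟩) (hle t ht)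
      intro t ht htn
      exact le_antisymm (hle_zero t ⟨ht, by exact_mod_cast htn⟩) (hu_nonneg t ht)
  intro t ht
  obtain ⟨n, hn⟩ := exists_nat_ge (T / δ)
  exact hzero n t ht (ht.2.trans ((div_le_iff₀ hδ).mp hn))

theorem integral_sub_rpow_sub_one_add {α β : ℝ} (hα : 0 < α) (hβ : 0 < β) (c t : ℝ) :
    ∫ s in c..t, ((t - s) ^ (α - 1) + (t - s) ^ (β - 1)) = (t - c) ^ α / α + (t - c) ^ β / β := by
  rw [intervalIntegral.integral_add (intervalIntegrable_sub_rpow_sub_one hα t c t)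
    (intervalIntegrable_sub_rpow_sub_one hβ t c t), integral_sub_rpow_sub_one hα,
    integral_sub_rpow_sub_one hβ]

theorem exists_pos_forall_mul_rpow_div_add_rpow_div_le {α β ε : ℝ} (hα : 0 < α)
    (hβ : 0 < β) (hε : 0 < ε) (b : ℝ) :
    ∃ δ > 0, ∀ x ∈ Set.Icc 0 δ, b * (x ^ α / α + x ^ β / β) ≤ ε := by
  have hcont : ContinuousAt (fun x : ℝ => b * (x ^ α / α + x ^ β / β)) 0 :=
    continuousAt_const.mul (((continuousAt_rpow_const 0 α (Or.inr hα.le)).div_const _).add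
      ((continuousAt_rpow_const 0 β (Or.inr hβ.le)).div_const _))
  have hsmall : ∀ᶠ x in nhdsWithin 0 (Set.Ici 0), b * (x ^ α / α + x ^ β / β) ≤ ε := by
    refine nhdsWithin_le_nhds (hcont.eventually (Iic_mem_nhds ?_))
    simpa [zero_rpow hα.ne', zero_rpow hβ.ne'] using hε
  exact mem_nhdsGE_iff_exists_Icc_subset.mp hsmall

theorem stmt_13_general (T a b α β : ℝ)
    (hα : 0 < α ∧ α < 1) (hβ : 0 < β ∧ β < 1)
    (u : ℝ → ℝ) (hu_meas : Measurable u)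
    (hu_nonneg : ∀ t ∈ Set.Icc (0:ℝ) T, 0 ≤ u t)
    (hu_bdd : ∃ M : ℝ, ∀ t ∈ Set.Icc (0:ℝ) T, u t ≤ M)
    (hineq : ∀ t ∈ Set.Icc (0:ℝ) T,
      u t ≤ a + b * ∫ s in (0:ℝ)..t, ((t - s) ^ (α - 1) + (t - s) ^ (β - 1)) * u s)
    (ha0 : a = 0) :
    ∀ t ∈ Set.Icc (0:ℝ) T, u t = 0 := by
  subst ha0
  have hK_nonneg (t s : ℝ) (hst : s ≤ t) : 0 ≤ (t - s) ^ (α - 1) + (t - s) ^ (β - 1) := by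
    have := sub_nonneg.mpr hst
    positivity
  obtain ⟨δ, hδ, hδ_small⟩ :=
    exists_pos_forall_mul_rpow_div_add_rpow_div_le hα.1 hβ.1 one_half_pos (max b 0)
  -- Replacing `b` by `max b 0` makes the kernel nonnegative; the inequality survives because
  -- the integral it multiplies is nonnegative.
  refine eq_zero_of_le_integral_kernel_mul
    (k := fun t s => max b 0 * ((t - s) ^ (α - 1) + (t - s) ^ (β - 1))) hδ one_half_lt_one
    (fun t s hst => mul_nonneg (le_max_right b 0) (hK_nonneg t s hst))
    (fun t _ => ((intervalIntegrable_sub_rpow_sub_one hα.1 t 0 t).add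
      (intervalIntegrable_sub_rpow_sub_one hβ.1 t 0 t)).const_mul _)
    (fun c t hc hct _ hδct => ?_) hu_meas.aestronglyMeasurable hu_nonneg hu_bdd (fun t ht => ?_)
  · rw [intervalIntegral.integral_const_mul, integral_sub_rpow_sub_one_add hα.1 hβ.1]
    exact hδ_small (t - c) ⟨sub_nonneg.mpr hct, hδct⟩
  · have hI : 0 ≤ ∫ s in (0:ℝ)..t, ((t - s) ^ (α - 1) + (t - s) ^ (β - 1)) * u s :=
      intervalIntegral.integral_nonneg ht.1 fun s hs =>
        mul_nonneg (hK_nonneg t s hs.2) (hu_nonneg s ⟨hs.1, hs.2.trans ht.2⟩)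
    calc u t ≤ b * ∫ s in (0:ℝ)..t, ((t - s) ^ (α - 1) + (t - s) ^ (β - 1)) * u s := by
          simpa using hineq t ht
      _ ≤ max b 0 * ∫ s in (0:ℝ)..t, ((t - s) ^ (α - 1) + (t - s) ^ (β - 1)) * u s :=
          mul_le_mul_of_nonneg_right (le_max_left b 0) hI
      _ = ∫ s in (0:ℝ)..t, max b 0 * ((t - s) ^ (α - 1) + (t - s) ^ (β - 1)) * u s := by
          simp only [← intervalIntegral.integral_const_mul, mul_assoc]

theorem stmt_13 (T a b α β : ℝ) (hT : 0 < T) (ha : 0 ≤ a)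
    (hα : 0 < α ∧ α < 1) (hβ : 0 < β ∧ β < 1)
    (u : ℝ → ℝ) (hu_meas : Measurable u)
    (hu_nonneg : ∀ t ∈ Set.Icc (0:ℝ) T, 0 ≤ u t)
    (hu_bdd : ∃ M : ℝ, ∀ t ∈ Set.Icc (0:ℝ) T, u t ≤ M)
    (hineq : ∀ t ∈ Set.Icc (0:ℝ) T,
      u t ≤ a + b * ∫ s in (0:ℝ)..t, ((t - s) ^ (α - 1) + (t - s) ^ (β - 1)) * u s)
    (ha0 : a = 0) :
    ∀ t ∈ Set.Icc (0:ℝ) T, u t = 0 :=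
  stmt_13_general T a b α β hα hβ u hu_meas hu_nonneg hu_bdd hineq ha0
end
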